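/- arXiv:2602.14274 — 7 statements merged into one kernel-verified Lean document; each statement's English description precedes it below -/
import Mathlib

section
/- Under the IRM with ML proxies, assume Var(θ̃(Z)) > 0 (i.e., g̃_1(Z) and g̃_0(Z) are not almost surely equal up to a constant shift, so that θ̃(Z) is non-degenerate). Then there is a unique pair (a₁, b₁) ∈ ℝ² satisfying the normal equations E[c(η̃) − a₁ − b₁(θ̃(Z) − E[θ̃(Z)])] = 0 and E[(c(η̃) − a₁ − b₁(θ̃(Z) − E[θ̃(Z)]))·(θ̃(Z) − E[θ̃(Z)])] = 0, and it is given by a₁ = E[θ(Z)] + E[bias₁] + E[bias₂] and b₁ = Cov(θ(Z), θ̃(Z))/Var(θ̃(Z)) + Cov(bias₁, θ̃(Z))/Var(θ̃(Z)) + Cov(bias₂, θ̃(Z))/Var(θ̃(Z)). -/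
/-!
Because `θ̃ - E[θ̃]` has mean zero, the normal equations decouple into `a₁ = E[c]` and
`b₁ = Cov(c, θ̃) / Var(θ̃)`. The doubly robust label satisfies
`E[c · ψ(Z)] = E[(θ + bias₁ + bias₂)(Z) · ψ(Z)]` for every square-integrable `ψ(Z)`: writing
`Y - g̃_T(Z) = U + (g_T - g̃_T)(Z)`, the term `H̃ · ψ(Z) · U` has mean zero since
`E[U | T, Z] = 0`, and in what remains `T` may be replaced by `μ(Z) = E[T | Z]`. Taking `ψ = 1`
and `ψ = θ̃` identifies `E[c]` and `Cov(c, θ̃)`, and bilinearity of the covariance splits them.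
-/

open MeasureTheory ProbabilityTheory
open scoped ENNReal

section NormalEquations

variable {Ω : Type*} [MeasurableSpace Ω] {μ : Measure Ω} [IsProbabilityMeasure μ] {C X : Ω → ℝ}

theorem integral_sub_integral_eq_zero (hX : Integrable X μ) : ∫ ω, (X ω - μ[X]) ∂μ = 0 := by
  simp [integral_sub hX (integrable_const _)]

theorem normal_equations_iff (hC : MemLp C 2 μ) (hX : MemLp X 2 μ) (hV : cov[X, X; μ] ≠ 0)
    (a b : ℝ) :
    (∫ ω, (C ω - a - b * (X ω - μ[X])) ∂μ = 0 ∧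
      ∫ ω, (C ω - a - b * (X ω - μ[X])) * (X ω - μ[X]) ∂μ = 0) ↔
    a = μ[C] ∧ b = cov[C, X; μ] / cov[X, X; μ] := by
  have hXc : MemLp (fun ω => X ω - μ[X]) 2 μ := hX.sub (memLp_const _)
  have hCc : MemLp (fun ω => C ω - μ[C]) 2 μ := hC.sub (memLp_const _)
  have hmean : ∫ ω, (X ω - μ[X]) ∂μ = 0 :=
    integral_sub_integral_eq_zero (hX.integrable one_le_two)
  have iC : Integrable C μ := hC.integrable one_le_two
  have iX : Integrable (fun ω => X ω - μ[X]) μ := hXc.integrable one_le_two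
  have iCX : Integrable (fun ω => (C ω - μ[C]) * (X ω - μ[X])) μ := hCc.integrable_mul hXc
  have iXX : Integrable (fun ω => (X ω - μ[X]) * (X ω - μ[X])) μ := hXc.integrable_mul hXc
  have h₁ : ∫ ω, (C ω - a - b * (X ω - μ[X])) ∂μ = μ[C] - a := by
    rw [integral_sub (by fun_prop) (by fun_prop), integral_sub iC (integrable_const a),
      integral_const_mul, hmean]
    simp
  have h₂ : ∫ ω, (C ω - a - b * (X ω - μ[X])) * (X ω - μ[X]) ∂μ
      = cov[C, X; μ] - b * cov[X, X; μ] := by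
    have hpt : ∀ ω, (C ω - a - b * (X ω - μ[X])) * (X ω - μ[X])
        = (C ω - μ[C]) * (X ω - μ[X]) - b * ((X ω - μ[X]) * (X ω - μ[X]))
          + (μ[C] - a) * (X ω - μ[X]) := fun ω => by ring
    simp_rw [hpt]
    rw [integral_add (by fun_prop) (by fun_prop), integral_sub iCX (by fun_prop),
      integral_const_mul, integral_const_mul, hmean, mul_zero, add_zero]
    rfl
  rw [h₁, h₂, eq_div_iff hV]
  constructor
  · rintro ⟨ha, hb⟩
    constructor <;> linarith
  · rintro ⟨ha, hb⟩
    constructor <;> simp [ha, hb]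

end NormalEquations

section ConditionalExpectation

variable {Ω : Type*} {m m₀ : MeasurableSpace Ω} {μ : Measure Ω} [IsFiniteMeasure μ] {f g : Ω → ℝ}

theorem integral_mul_condExp (hm : m ≤ m₀) (hf : StronglyMeasurable[m] f)
    (hfg : Integrable (f * g) μ) (hg : Integrable g μ) :
    ∫ ω, f ω * g ω ∂μ = ∫ ω, f ω * μ[g | m] ω ∂μ := by
  rw [← integral_condExp hm]
  exact integral_congr_ae (condExp_mul_of_stronglyMeasurable_left hf hfg hg)

theorem integral_mul_eq_zero_of_condExp_eq_zero (hm : m ≤ m₀) (hf : StronglyMeasurable[m] f)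
    (hfg : Integrable (f * g) μ) (hg : Integrable g μ) (hg₀ : μ[g | m] =ᵐ[μ] 0) :
    ∫ ω, f ω * g ω ∂μ = 0 := by
  rw [integral_mul_condExp hm hf hfg hg, integral_eq_zero_of_ae]
  filter_upwards [hg₀] with ω hω
  simp [hω]

end ConditionalExpectation

section MemLp

variable {Ω : Type*} [MeasurableSpace Ω] {μ : Measure Ω} {f g : Ω → ℝ} {q : ℝ≥0∞}

theorem MeasureTheory.MemLp.div_of_le {ε : ℝ} (hf : MemLp f q μ) (hg : Measurable g) (hε : 0 < ε)
    (hgε : ∀ᵐ ω ∂μ, ε ≤ g ω) : MemLp (fun ω => f ω / g ω) q μ := by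
  have hinv : MemLp (fun ω => (g ω)⁻¹) ∞ μ := by
    refine memLp_top_of_bound hg.inv.aestronglyMeasurable ε⁻¹ ?_
    filter_upwards [hgε] with ω hω
    rw [norm_inv, Real.norm_of_nonneg (hε.le.trans hω)]
    exact inv_anti₀ hε hω
  simpa only [div_eq_mul_inv] using hinv.mul' (r := q) hf

theorem memLp_ite {r : Ω → Prop} [DecidablePred r] (hr : MeasurableSet {ω | r ω})
    (hf : MemLp f q μ) (hg : MemLp g q μ) : MemLp (fun ω => if r ω then f ω else g ω) q μ :=
  MemLp.piecewise (s := {ω | r ω}) hr (hf.restrict _) (hg.restrict _)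

end MemLp

section InteractiveRegressionModel

variable {Ω 𝓩 : Type*} [MeasurableSpace Ω] [MeasurableSpace 𝓩] {P : Measure Ω}
  {Y T : Ω → ℝ} {Z : Ω → 𝓩} {g0 g1 p gt0 gt1 pt : 𝓩 → ℝ} {ε : ℝ}

noncomputable def drLabel (Y T : Ω → ℝ) (Z : Ω → 𝓩) (gt0 gt1 pt : 𝓩 → ℝ) (ω : Ω) : ℝ :=
  gt1 (Z ω) - gt0 (Z ω) + (T ω / pt (Z ω) - (1 - T ω) / (1 - pt (Z ω))) *
    (Y ω - if T ω = 1 then gt1 (Z ω) else gt0 (Z ω))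

theorem memLp_top_of_forall_eq_zero_or_eq_one (hTm : Measurable T)
    (hTbin : ∀ ω, T ω = 0 ∨ T ω = 1) : MemLp T ∞ P :=
  memLp_top_of_bound hTm.aestronglyMeasurable 1 (.of_forall fun ω => by
    rcases hTbin ω with h | h <;> simp [h])

theorem memLp_top_propensityScore (hZm : Measurable Z) (hpm : Measurable p)
    (hpbd : ∀ᵐ ω ∂P, 0 < p (Z ω) ∧ p (Z ω) < 1) : MemLp (fun ω => p (Z ω)) ∞ P :=
  memLp_top_of_bound (hpm.comp hZm).aestronglyMeasurable 1 (hpbd.mono fun _ h => by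
    rw [Real.norm_of_nonneg h.1.le]; exact h.2.le)

theorem MeasureTheory.MemLp.div_propensity {f : Ω → ℝ} {q : ℝ≥0∞} (hf : MemLp f q P)
    (hZm : Measurable Z) (hptm : Measurable pt) (hε : 0 < ε)
    (hptbd : ∀ᵐ ω ∂P, ε ≤ pt (Z ω) ∧ pt (Z ω) ≤ 1 - ε) :
    MemLp (fun ω => f ω / pt (Z ω)) q P :=
  hf.div_of_le (hptm.comp hZm) hε (hptbd.mono fun _ h => h.1)

theorem MeasureTheory.MemLp.div_one_sub_propensity {f : Ω → ℝ} {q : ℝ≥0∞} (hf : MemLp f q P)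
    (hZm : Measurable Z) (hptm : Measurable pt) (hε : 0 < ε)
    (hptbd : ∀ᵐ ω ∂P, ε ≤ pt (Z ω) ∧ pt (Z ω) ≤ 1 - ε) :
    MemLp (fun ω => f ω / (1 - pt (Z ω))) q P :=
  hf.div_of_le (g := fun ω => 1 - pt (Z ω)) (measurable_const.sub (hptm.comp hZm)) hε
    (hptbd.mono fun _ h => by linarith [h.2])

theorem memLp_top_inverseWeight (hTm : Measurable T) (hZm : Measurable Z)
    (hTbin : ∀ ω, T ω = 0 ∨ T ω = 1) (hptm : Measurable pt) (hε : 0 < ε)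
    (hptbd : ∀ᵐ ω ∂P, ε ≤ pt (Z ω) ∧ pt (Z ω) ≤ 1 - ε) :
    MemLp (fun ω => T ω / pt (Z ω) - (1 - T ω) / (1 - pt (Z ω))) ∞ P := by
  have hT : MemLp T ∞ P := memLp_top_of_forall_eq_zero_or_eq_one hTm hTbin
  exact (hT.div_propensity hZm hptm hε hptbd).sub
    (((memLp_top_const 1).sub hT).div_one_sub_propensity hZm hptm hε hptbd)

theorem memLp_drLabel (hTm : Measurable T) (hZm : Measurable Z)
    (hTbin : ∀ ω, T ω = 0 ∨ T ω = 1) (hptm : Measurable pt) (hε : 0 < ε)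
    (hptbd : ∀ᵐ ω ∂P, ε ≤ pt (Z ω) ∧ pt (Z ω) ≤ 1 - ε) (hY2 : MemLp Y 2 P)
    (hgt02 : MemLp (fun ω => gt0 (Z ω)) 2 P) (hgt12 : MemLp (fun ω => gt1 (Z ω)) 2 P) :
    MemLp (drLabel Y T Z gt0 gt1 pt) 2 P :=
  (hgt12.sub hgt02).add ((hY2.sub (memLp_ite (hTm (measurableSet_singleton 1)) hgt12
    hgt02)).mul' (r := 2) (memLp_top_inverseWeight hTm hZm hTbin hptm hε hptbd))

theorem memLp_treatedBias (hZm : Measurable Z) (hpm : Measurable p)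
    (hpbd : ∀ᵐ ω ∂P, 0 < p (Z ω) ∧ p (Z ω) < 1) (hptm : Measurable pt) (hε : 0 < ε)
    (hptbd : ∀ᵐ ω ∂P, ε ≤ pt (Z ω) ∧ pt (Z ω) ≤ 1 - ε)
    (hg12 : MemLp (fun ω => g1 (Z ω)) 2 P) (hgt12 : MemLp (fun ω => gt1 (Z ω)) 2 P) :
    MemLp (fun ω => (p (Z ω) / pt (Z ω) - 1) * (g1 (Z ω) - gt1 (Z ω))) 2 P :=
  (hg12.sub hgt12).mul' (r := 2) (((memLp_top_propensityScore hZm hpm hpbd).div_propensity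
    hZm hptm hε hptbd).sub (memLp_top_const 1))

theorem memLp_controlBias (hZm : Measurable Z) (hpm : Measurable p)
    (hpbd : ∀ᵐ ω ∂P, 0 < p (Z ω) ∧ p (Z ω) < 1) (hptm : Measurable pt) (hε : 0 < ε)
    (hptbd : ∀ᵐ ω ∂P, ε ≤ pt (Z ω) ∧ pt (Z ω) ≤ 1 - ε)
    (hg02 : MemLp (fun ω => g0 (Z ω)) 2 P) (hgt02 : MemLp (fun ω => gt0 (Z ω)) 2 P) :
    MemLp (fun ω => (1 - (1 - p (Z ω)) / (1 - pt (Z ω))) * (g0 (Z ω) - gt0 (Z ω))) 2 P :=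
  (hg02.sub hgt02).mul' (r := 2) ((memLp_top_const 1).sub (((memLp_top_const 1).sub
    (memLp_top_propensityScore hZm hpm hpbd)).div_one_sub_propensity hZm hptm hε hptbd))

theorem inverseWeight_mul_sub_ite {t q y a₀ a₁ b₀ b₁ : ℝ} (ht : t = 0 ∨ t = 1) :
    (t / q - (1 - t) / (1 - q)) * (y - if t = 1 then b₁ else b₀) =
      (t / q - (1 - t) / (1 - q)) * (y - if t = 1 then a₁ else a₀)
        + ((a₁ - b₁) / q + (a₀ - b₀) / (1 - q)) * t - (a₀ - b₀) / (1 - q) := by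
  rcases ht with rfl | rfl <;> simp <;> ring

theorem integral_mul_treatment [IsFiniteMeasure P] (hTm : Measurable T) (hZm : Measurable Z)
    (hTbin : ∀ ω, T ω = 0 ∨ T ω = 1)
    (hprop : (fun ω => p (Z ω)) =ᵐ[P] P[T | MeasurableSpace.comap Z inferInstance])
    {f : 𝓩 → ℝ} (hfm : Measurable f) (hf : Integrable (fun ω => f (Z ω)) P) :
    ∫ ω, f (Z ω) * T ω ∂P = ∫ ω, f (Z ω) * p (Z ω) ∂P := by
  have hT : MemLp T ∞ P := memLp_top_of_forall_eq_zero_or_eq_one hTm hTbin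
  rw [integral_mul_condExp (f := fun ω => f (Z ω)) hZm.comap_le
    (hfm.comp (comap_measurable Z)).stronglyMeasurable (hf.mul_of_top_left hT)
    (hT.integrable le_top)]
  refine integral_congr_ae ?_
  filter_upwards [hprop] with ω h
  rw [h]

theorem integral_mul_outcomeResidual_eq_zero [IsFiniteMeasure P] (hTm : Measurable T)
    (hZm : Measurable Z)
    (hU : P[fun ω => Y ω - (if T ω = 1 then g1 (Z ω) else g0 (Z ω)) |
        MeasurableSpace.comap (fun ω => (T ω, Z ω)) inferInstance] =ᵐ[P] 0)
    (hUi : Integrable (fun ω => Y ω - (if T ω = 1 then g1 (Z ω) else g0 (Z ω))) P)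
    {f : ℝ × 𝓩 → ℝ} (hfm : Measurable f)
    (hfU : Integrable (fun ω => f (T ω, Z ω) * (Y ω - if T ω = 1 then g1 (Z ω) else g0 (Z ω))) P) :
    ∫ ω, f (T ω, Z ω) * (Y ω - if T ω = 1 then g1 (Z ω) else g0 (Z ω)) ∂P = 0 :=
  integral_mul_eq_zero_of_condExp_eq_zero (hTm.prodMk hZm).comap_le
    (hfm.comp (comap_measurable _)).stronglyMeasurable hfU hUi hU

theorem integral_drLabel_mul [IsFiniteMeasure P] (hTm : Measurable T) (hZm : Measurable Z)
    (hTbin : ∀ ω, T ω = 0 ∨ T ω = 1)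
    (hg0m : Measurable g0) (hg1m : Measurable g1) (hpm : Measurable p)
    (hU : P[fun ω => Y ω - (if T ω = 1 then g1 (Z ω) else g0 (Z ω)) |
        MeasurableSpace.comap (fun ω => (T ω, Z ω)) inferInstance] =ᵐ[P] 0)
    (hprop : (fun ω => p (Z ω)) =ᵐ[P] P[T | MeasurableSpace.comap Z inferInstance])
    (hpbd : ∀ᵐ ω ∂P, 0 < p (Z ω) ∧ p (Z ω) < 1)
    (hgt0m : Measurable gt0) (hgt1m : Measurable gt1) (hptm : Measurable pt) (hε : 0 < ε)
    (hptbd : ∀ᵐ ω ∂P, ε ≤ pt (Z ω) ∧ pt (Z ω) ≤ 1 - ε) (hY2 : MemLp Y 2 P)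
    (hg02 : MemLp (fun ω => g0 (Z ω)) 2 P) (hg12 : MemLp (fun ω => g1 (Z ω)) 2 P)
    (hgt02 : MemLp (fun ω => gt0 (Z ω)) 2 P) (hgt12 : MemLp (fun ω => gt1 (Z ω)) 2 P)
    {ψ : 𝓩 → ℝ} (hψm : Measurable ψ) (hψ2 : MemLp (fun ω => ψ (Z ω)) 2 P) :
    ∫ ω, drLabel Y T Z gt0 gt1 pt ω * ψ (Z ω) ∂P =
      ∫ ω, (g1 (Z ω) - g0 (Z ω) + (p (Z ω) / pt (Z ω) - 1) * (g1 (Z ω) - gt1 (Z ω)) +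
        (1 - (1 - p (Z ω)) / (1 - pt (Z ω))) * (g0 (Z ω) - gt0 (Z ω))) * ψ (Z ω) ∂P := by
  set U : Ω → ℝ := fun ω => Y ω - if T ω = 1 then g1 (Z ω) else g0 (Z ω)
  set H : ℝ × 𝓩 → ℝ := fun q => (q.1 / pt q.2 - (1 - q.1) / (1 - pt q.2)) * ψ q.2
  set B : 𝓩 → ℝ := fun z => (g0 z - gt0 z) / (1 - pt z) * ψ z
  set F : 𝓩 → ℝ := fun z => ((g1 z - gt1 z) / pt z + (g0 z - gt0 z) / (1 - pt z)) * ψ z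
  have hU2 : MemLp U 2 P := hY2.sub (memLp_ite (hTm (measurableSet_singleton 1)) hg12 hg02)
  have hθψ : Integrable (fun ω => (gt1 (Z ω) - gt0 (Z ω)) * ψ (Z ω)) P :=
    (hgt12.sub hgt02).integrable_mul hψ2
  have hHU : Integrable (fun ω => H (T ω, Z ω) * U ω) P :=
    (hψ2.mul' (r := 2) (memLp_top_inverseWeight hTm hZm hTbin hptm hε hptbd)).integrable_mul hU2
  have hB : Integrable (fun ω => B (Z ω)) P :=
    ((hg02.sub hgt02).div_one_sub_propensity hZm hptm hε hptbd).integrable_mul hψ2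
  have hF : Integrable (fun ω => F (Z ω)) P :=
    (((hg12.sub hgt12).div_propensity hZm hptm hε hptbd).add
      ((hg02.sub hgt02).div_one_sub_propensity hZm hptm hε hptbd)).integrable_mul hψ2
  have hFT : Integrable (fun ω => F (Z ω) * T ω) P :=
    hF.mul_of_top_left (memLp_top_of_forall_eq_zero_or_eq_one hTm hTbin)
  have hFp : Integrable (fun ω => F (Z ω) * p (Z ω)) P :=
    hF.mul_of_top_left (memLp_top_propensityScore hZm hpm hpbd)
  calc ∫ ω, drLabel Y T Z gt0 gt1 pt ω * ψ (Z ω) ∂P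
      = ∫ ω, ((gt1 (Z ω) - gt0 (Z ω)) * ψ (Z ω) + H (T ω, Z ω) * U ω + F (Z ω) * T ω
          - B (Z ω)) ∂P := by
        refine integral_congr_ae (.of_forall fun ω => ?_)
        dsimp only [drLabel, U, H, F, B]
        rw [inverseWeight_mul_sub_ite (a₀ := g0 (Z ω)) (a₁ := g1 (Z ω)) (hTbin ω)]
        ring
    _ = (∫ ω, (gt1 (Z ω) - gt0 (Z ω)) * ψ (Z ω) ∂P) + (∫ ω, H (T ω, Z ω) * U ω ∂P)
          + (∫ ω, F (Z ω) * T ω ∂P) - ∫ ω, B (Z ω) ∂P := by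
      rw [integral_sub (by fun_prop) hB, integral_add (by fun_prop) hFT, integral_add hθψ hHU]
    _ = ∫ ω, ((gt1 (Z ω) - gt0 (Z ω)) * ψ (Z ω) + F (Z ω) * p (Z ω) - B (Z ω)) ∂P := by
      rw [integral_mul_outcomeResidual_eq_zero hTm hZm hU (hU2.integrable one_le_two)
        (by fun_prop) hHU, integral_mul_treatment hTm hZm hTbin hprop (by fun_prop) hF,
        add_zero, integral_sub (by fun_prop) hB, integral_add hθψ hFp]
    _ = _ := by
      refine integral_congr_ae (.of_forall fun ω => ?_)
      simp only [F, B]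
      ring

end InteractiveRegressionModel

theorem blp_normal_equations_solution_general
    {Ω : Type*} [MeasurableSpace Ω] (P : Measure Ω) [IsProbabilityMeasure P]
    {𝓩 : Type*} [MeasurableSpace 𝓩]
    (Y T : Ω → ℝ) (Z : Ω → 𝓩)
    (hTm : Measurable T) (hZm : Measurable Z)
    (hTbin : ∀ ω, T ω = 0 ∨ T ω = 1)
    (g0 g1 p : 𝓩 → ℝ) (hg0m : Measurable g0) (hg1m : Measurable g1) (hpm : Measurable p)
    (hU : MeasureTheory.condExp
        (MeasurableSpace.comap (fun ω => (T ω, Z ω)) inferInstance) P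
        (fun ω => Y ω - (if T ω = 1 then g1 (Z ω) else g0 (Z ω))) =ᵐ[P] 0)
    (hprop : (fun ω => p (Z ω)) =ᵐ[P]
        MeasureTheory.condExp (MeasurableSpace.comap Z inferInstance) P T)
    (hpbd : ∀ᵐ ω ∂P, 0 < p (Z ω) ∧ p (Z ω) < 1)
    (gt0 gt1 pt : 𝓩 → ℝ)
    (hgt0m : Measurable gt0) (hgt1m : Measurable gt1) (hptm : Measurable pt)
    (ε : ℝ) (hε0 : 0 < ε)
    (hptbd : ∀ᵐ ω ∂P, ε ≤ pt (Z ω) ∧ pt (Z ω) ≤ 1 - ε)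
    (θ : Ω → ℝ) (hθ : θ = fun ω => g1 (Z ω) - g0 (Z ω))
    (θt : Ω → ℝ) (hθt : θt = fun ω => gt1 (Z ω) - gt0 (Z ω))
    (Ht : Ω → ℝ) (hHt : Ht = fun ω => T ω / pt (Z ω) - (1 - T ω) / (1 - pt (Z ω)))
    (c : Ω → ℝ)
    (hc : c = fun ω => gt1 (Z ω) - gt0 (Z ω) +
      Ht ω * (Y ω - (if T ω = 1 then gt1 (Z ω) else gt0 (Z ω))))
    (bias1 bias2 : Ω → ℝ)
    (hbias1 : bias1 = fun ω => (p (Z ω) / pt (Z ω) - 1) * (g1 (Z ω) - gt1 (Z ω)))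
    (hbias2 : bias2 = fun ω =>
      (1 - (1 - p (Z ω)) / (1 - pt (Z ω))) * (g0 (Z ω) - gt0 (Z ω)))
    (cov : (Ω → ℝ) → (Ω → ℝ) → ℝ)
    (hcov : ∀ f g : Ω → ℝ, cov f g =
      ∫ ω, (f ω - ∫ m, f m ∂P) * (g ω - ∫ m, g m ∂P) ∂P)
    (hY2 : MemLp Y 2 P)
    (hg02 : MemLp (fun ω => g0 (Z ω)) 2 P) (hg12 : MemLp (fun ω => g1 (Z ω)) 2 P)
    (hgt02 : MemLp (fun ω => gt0 (Z ω)) 2 P) (hgt12 : MemLp (fun ω => gt1 (Z ω)) 2 P)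
    (hvar : 0 < cov θt θt)
    :
    ∀ a b : ℝ,
      ((∫ ω, (c ω - a - b * (θt ω - ∫ m, θt m ∂P)) ∂P = 0) ∧
        (∫ ω, (c ω - a - b * (θt ω - ∫ m, θt m ∂P)) * (θt ω - ∫ m, θt m ∂P) ∂P = 0))
      ↔ (a = (∫ ω, θ ω ∂P) + (∫ ω, bias1 ω ∂P) + (∫ ω, bias2 ω ∂P) ∧
          b = cov θ θt / cov θt θt + cov bias1 θt / cov θt θt +
              cov bias2 θt / cov θt θt) := by
  intro a b
  have hcov' : ∀ f g, cov f g = cov[f, g; P] := hcov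
  simp only [hcov'] at hvar ⊢
  have hc' : c = drLabel Y T Z gt0 gt1 pt := by rw [hc, hHt]; rfl
  have hθt2 : MemLp θt 2 P := hθt ▸ hgt12.sub hgt02
  have hθ2 : MemLp θ 2 P := hθ ▸ hg12.sub hg02
  have hb1 : MemLp bias1 2 P := hbias1 ▸ memLp_treatedBias hZm hpm hpbd hptm hε0 hptbd hg12 hgt12
  have hb2 : MemLp bias2 2 P := hbias2 ▸ memLp_controlBias hZm hpm hpbd hptm hε0 hptbd hg02 hgt02
  have hc2 : MemLp c 2 P := hc' ▸ memLp_drLabel hTm hZm hTbin hptm hε0 hptbd hY2 hgt02 hgt12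
  have hkey : ∀ ψ : 𝓩 → ℝ, Measurable ψ → MemLp (fun ω => ψ (Z ω)) 2 P →
      ∫ ω, c ω * ψ (Z ω) ∂P = ∫ ω, (θ + bias1 + bias2) ω * ψ (Z ω) ∂P := by
    intro ψ hψm hψ2
    rw [hc', hθ, hbias1, hbias2]
    exact integral_drLabel_mul hTm hZm hTbin hg0m hg1m hpm hU hprop hpbd hgt0m hgt1m hptm hε0
      hptbd hY2 hg02 hg12 hgt02 hgt12 hψm hψ2
  have hmean : P[c] = P[θ + bias1 + bias2] := by
    simpa only [mul_one] using hkey (fun _ => 1) measurable_const (memLp_const 1)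
  have hcross : P[c * θt] = P[(θ + bias1 + bias2) * θt] := by
    rw [hθt]
    exact hkey _ (hgt1m.sub hgt0m) (hgt12.sub hgt02)
  have hcovc : cov[c, θt; P] = cov[θ + bias1 + bias2, θt; P] := by
    rw [covariance_eq_sub hc2 hθt2, covariance_eq_sub ((hθ2.add hb1).add hb2) hθt2, hmean, hcross]
  rw [normal_equations_iff hc2 hθt2 hvar.ne', hcovc, covariance_add_left (hθ2.add hb1) hb2 hθt2,
    covariance_add_left hθ2 hb1 hθt2, hmean, integral_add' ((hθ2.add hb1).integrable one_le_two)
    (hb2.integrable one_le_two), integral_add' (hθ2.integrable one_le_two)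
    (hb1.integrable one_le_two), add_div, add_div]

theorem blp_normal_equations_solution
    {Ω : Type*} [MeasurableSpace Ω] (P : Measure Ω) [IsProbabilityMeasure P]
    {𝓩 : Type*} [MeasurableSpace 𝓩]
    (Y T : Ω → ℝ) (Z : Ω → 𝓩)
    (hYm : Measurable Y) (hTm : Measurable T) (hZm : Measurable Z)
    (hTbin : ∀ ω, T ω = 0 ∨ T ω = 1)
    (g0 g1 p : 𝓩 → ℝ) (hg0m : Measurable g0) (hg1m : Measurable g1) (hpm : Measurable p)
    (hU : MeasureTheory.condExp
        (MeasurableSpace.comap (fun ω => (T ω, Z ω)) inferInstance) P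
        (fun ω => Y ω - (if T ω = 1 then g1 (Z ω) else g0 (Z ω))) =ᵐ[P] 0)
    (hprop : (fun ω => p (Z ω)) =ᵐ[P]
        MeasureTheory.condExp (MeasurableSpace.comap Z inferInstance) P T)
    (hpbd : ∀ᵐ ω ∂P, 0 < p (Z ω) ∧ p (Z ω) < 1)
    (gt0 gt1 pt : 𝓩 → ℝ)
    (hgt0m : Measurable gt0) (hgt1m : Measurable gt1) (hptm : Measurable pt)
    (ε : ℝ) (hε0 : 0 < ε) (hε1 : ε < 1 / 2)
    (hptbd : ∀ᵐ ω ∂P, ε ≤ pt (Z ω) ∧ pt (Z ω) ≤ 1 - ε)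
    (θ : Ω → ℝ) (hθ : θ = fun ω => g1 (Z ω) - g0 (Z ω))
    (θt : Ω → ℝ) (hθt : θt = fun ω => gt1 (Z ω) - gt0 (Z ω))
    (Ht : Ω → ℝ) (hHt : Ht = fun ω => T ω / pt (Z ω) - (1 - T ω) / (1 - pt (Z ω)))
    (c : Ω → ℝ)
    (hc : c = fun ω => gt1 (Z ω) - gt0 (Z ω) +
      Ht ω * (Y ω - (if T ω = 1 then gt1 (Z ω) else gt0 (Z ω))))
    (bias1 bias2 : Ω → ℝ)
    (hbias1 : bias1 = fun ω => (p (Z ω) / pt (Z ω) - 1) * (g1 (Z ω) - gt1 (Z ω)))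
    (hbias2 : bias2 = fun ω =>
      (1 - (1 - p (Z ω)) / (1 - pt (Z ω))) * (g0 (Z ω) - gt0 (Z ω)))
    (cov : (Ω → ℝ) → (Ω → ℝ) → ℝ)
    (hcov : ∀ f g : Ω → ℝ, cov f g =
      ∫ ω, (f ω - ∫ m, f m ∂P) * (g ω - ∫ m, g m ∂P) ∂P)
    (hY2 : MemLp Y 2 P)
    (hg02 : MemLp (fun ω => g0 (Z ω)) 2 P) (hg12 : MemLp (fun ω => g1 (Z ω)) 2 P)
    (hgt02 : MemLp (fun ω => gt0 (Z ω)) 2 P) (hgt12 : MemLp (fun ω => gt1 (Z ω)) 2 P)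
    (hvar : 0 < cov θt θt)
    :
    ∀ a b : ℝ,
      ((∫ ω, (c ω - a - b * (θt ω - ∫ m, θt m ∂P)) ∂P = 0) ∧
        (∫ ω, (c ω - a - b * (θt ω - ∫ m, θt m ∂P)) * (θt ω - ∫ m, θt m ∂P) ∂P = 0))
      ↔ (a = (∫ ω, θ ω ∂P) + (∫ ω, bias1 ω ∂P) + (∫ ω, bias2 ω ∂P) ∧
          b = cov θ θt / cov θt θt + cov bias1 θt / cov θt θt +
              cov bias2 θt / cov θt θt) :=
  blp_normal_equations_solution_general P Y T Z hTm hZm hTbin g0 g1 p hg0m hg1m hpm hU hprop hpbd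
    gt0 gt1 pt hgt0m hgt1m hptm ε hε0 hptbd θ hθ θt hθt Ht hHt c hc bias1 bias2 hbias1 hbias2 cov
    hcov hY2 hg02 hg12 hgt02 hgt12 hvar
end

section
/- Under the IRM with ML proxies, the expectation of the doubly robust label satisfies E[c(η̃)] = E[θ(Z)] + E[bias₁] + E[bias₂]. -/
/-!
With `U := Y - g_T(Z)`, `e₁ := (g₁ - g̃₁) / μ̃` and `e₀ := (g₀ - g̃₀) / (1 - μ̃)`, the identity
`c = θ + bias₁ + bias₂ + H̃ U + (e₁ + e₀)(Z) (T - μ(Z))` holds pointwise because `T ∈ {0, 1}`.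
Both extra terms are a weight times a residual whose conditional expectation vanishes: `H̃` is
bounded and `σ(T, Z)`-measurable with `E[U | T, Z] = 0`, and `(e₁ + e₀)(Z)` is
`σ(Z)`-measurable with `E[T - μ(Z) | Z] = 0`. Pulling the weight out of the conditional
expectation, both integrate to zero.
-/

open MeasureTheory ProbabilityTheory

section ConditionalExpectation

variable {Ω : Type*} {m m₀ : MeasurableSpace Ω} {μ : Measure Ω} {f g h : Ω → ℝ}

lemma integrable_mul_of_ae_eq_condExp (hf : AEStronglyMeasurable[m] f μ)
    (hfg : Integrable (f * g) μ) (hg : Integrable g μ) (hh : h =ᵐ[μ] μ[g|m]) :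
    Integrable (f * h) μ :=
  integrable_condExp.congr <| (condExp_mul_of_aestronglyMeasurable_left hf hfg hg).trans
    (Filter.EventuallyEq.rfl.mul hh.symm)

lemma integral_mul_eq_zero_of_condExp_ae_eq_zero (hm : m ≤ m₀) [SigmaFinite (μ.trim hm)]
    (hf : AEStronglyMeasurable[m] f μ) (hfg : Integrable (f * g) μ) (hg : Integrable g μ)
    (hg₀ : μ[g|m] =ᵐ[μ] 0) : ∫ ω, f ω * g ω ∂μ = 0 :=
  calc ∫ ω, f ω * g ω ∂μ = ∫ ω, μ[f * g|m] ω ∂μ := (integral_condExp hm).symm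
    _ = ∫ ω, f ω * 0 ∂μ := integral_congr_ae <|
      (condExp_mul_of_aestronglyMeasurable_left hf hfg hg).trans
        (Filter.EventuallyEq.rfl.mul hg₀)
    _ = 0 := by simp

lemma condExp_sub_ae_eq_zero_of_ae_eq_condExp (hm : m ≤ m₀) [SigmaFinite (μ.trim hm)]
    (hg : Integrable g μ) (hh : h =ᵐ[μ] μ[g|m]) : μ[g - h|m] =ᵐ[μ] 0 := by
  have hh_cond : μ[h|m] =ᵐ[μ] μ[g|m] :=
    (condExp_congr_ae hh).trans (condExp_condExp_of_le le_rfl hm)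
  filter_upwards [condExp_sub hg (integrable_condExp.congr hh.symm) m, hh_cond]
    with ω hsub hcond
  simp [hsub, hcond]

lemma MeasureTheory.Integrable.div_of_le_abs {a : Ω → ℝ} {ε : ℝ} (hf : Integrable f μ)
    (ha : AEStronglyMeasurable a μ) (hε : 0 < ε) (ha_bdd : ∀ᵐ ω ∂μ, ε ≤ |a ω|) :
    Integrable (fun ω => f ω / a ω) μ := by
  refine (hf.bdd_mul (c := ε⁻¹) ha.aemeasurable.inv.aestronglyMeasurable
    (ha_bdd.mono fun ω hω => ?_)).congr
    (Filter.Eventually.of_forall fun ω => (div_eq_inv_mul _ _).symm)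
  rw [Pi.inv_apply, norm_inv, Real.norm_eq_abs]
  exact inv_anti₀ hε hω

end ConditionalExpectation

section Propensity

variable {Ω 𝓩 : Type*} [MeasurableSpace Ω] [MeasurableSpace 𝓩] {P : Measure Ω}
  [IsFiniteMeasure P] {T : Ω → ℝ} {Z : Ω → 𝓩} {p f : 𝓩 → ℝ} {C : ℝ}

lemma integrable_comp_mul_of_ae_eq_condExp (hT : Measurable T)
    (hT_bdd : ∀ᵐ ω ∂P, ‖T ω‖ ≤ C)
    (hp : (fun ω => p (Z ω)) =ᵐ[P] P[T|MeasurableSpace.comap Z inferInstance])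
    (hf : Measurable f) (hfi : Integrable (fun ω => f (Z ω)) P) :
    Integrable (fun ω => f (Z ω) * p (Z ω)) P :=
  integrable_mul_of_ae_eq_condExp (hf.comp (comap_measurable Z)).aestronglyMeasurable
    (hfi.mul_bdd hT.aestronglyMeasurable hT_bdd) (.of_bound hT.aestronglyMeasurable C hT_bdd) hp

lemma integrable_comp_mul_sub_of_ae_eq_condExp (hT : Measurable T)
    (hT_bdd : ∀ᵐ ω ∂P, ‖T ω‖ ≤ C)
    (hp : (fun ω => p (Z ω)) =ᵐ[P] P[T|MeasurableSpace.comap Z inferInstance])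
    (hf : Measurable f) (hfi : Integrable (fun ω => f (Z ω)) P) :
    Integrable (fun ω => f (Z ω) * (T ω - p (Z ω))) P :=
  ((hfi.mul_bdd hT.aestronglyMeasurable hT_bdd).sub
    (integrable_comp_mul_of_ae_eq_condExp hT hT_bdd hp hf hfi)).congr
    (Filter.Eventually.of_forall fun _ => (mul_sub _ _ _).symm)

lemma integral_comp_mul_sub_eq_zero_of_ae_eq_condExp (hZ : Measurable Z) (hT : Measurable T)
    (hT_bdd : ∀ᵐ ω ∂P, ‖T ω‖ ≤ C)
    (hp : (fun ω => p (Z ω)) =ᵐ[P] P[T|MeasurableSpace.comap Z inferInstance])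
    (hf : Measurable f) (hfi : Integrable (fun ω => f (Z ω)) P) :
    ∫ ω, f (Z ω) * (T ω - p (Z ω)) ∂P = 0 := by
  have hTi : Integrable T P := .of_bound hT.aestronglyMeasurable C hT_bdd
  exact integral_mul_eq_zero_of_condExp_ae_eq_zero hZ.comap_le
    (hf.comp (comap_measurable Z)).aestronglyMeasurable
    (integrable_comp_mul_sub_of_ae_eq_condExp hT hT_bdd hp hf hfi)
    (hTi.sub (integrable_condExp.congr hp.symm))
    (condExp_sub_ae_eq_zero_of_ae_eq_condExp hZ.comap_le hTi hp)

end Propensity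

lemma abs_div_sub_one_sub_div_one_sub_le {t a ε : ℝ} (ht : t = 0 ∨ t = 1) (hε : 0 < ε)
    (hεa : ε ≤ a) (ha : a ≤ 1 - ε) : |t / a - (1 - t) / (1 - a)| ≤ ε⁻¹ := by
  rcases ht with rfl | rfl
  · rw [zero_div, zero_sub, sub_zero, abs_neg, one_div, abs_of_pos (inv_pos.mpr (by linarith))]
    exact inv_anti₀ hε (by linarith)
  · rw [sub_self, zero_div, sub_zero, one_div, abs_of_pos (inv_pos.mpr (by linarith))]
    exact inv_anti₀ hε hεa

lemma stronglyMeasurable_comap_div_sub_one_sub_div_one_sub {Ω 𝓩 : Type*} [MeasurableSpace 𝓩]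
    {T : Ω → ℝ} {Z : Ω → 𝓩} {pt : 𝓩 → ℝ} (hpt : Measurable pt) :
    StronglyMeasurable[MeasurableSpace.comap (fun ω => (T ω, Z ω)) inferInstance]
      (fun ω => T ω / pt (Z ω) - (1 - T ω) / (1 - pt (Z ω))) :=
  (((measurable_fst.div (hpt.comp measurable_snd)).sub
    ((measurable_const.sub measurable_fst).div (measurable_const.sub
      (hpt.comp measurable_snd)))).comp (comap_measurable _)).stronglyMeasurable

section InverseProbabilityWeight

variable {Ω 𝓩 : Type*} [MeasurableSpace Ω] [MeasurableSpace 𝓩] {P : Measure Ω}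
  {T V : Ω → ℝ} {Z : Ω → 𝓩} {pt : 𝓩 → ℝ} {ε : ℝ}

lemma integrable_div_sub_one_sub_div_one_sub_mul (hT : Measurable T) (hZ : Measurable Z)
    (hT_bin : ∀ ω, T ω = 0 ∨ T ω = 1) (hpt : Measurable pt) (hε : 0 < ε)
    (hpt_bdd : ∀ᵐ ω ∂P, ε ≤ pt (Z ω) ∧ pt (Z ω) ≤ 1 - ε) (hV : Integrable V P) :
    Integrable (fun ω => (T ω / pt (Z ω) - (1 - T ω) / (1 - pt (Z ω))) * V ω) P :=
  hV.bdd_mul ((stronglyMeasurable_comap_div_sub_one_sub_div_one_sub hpt).mono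
      (hT.prodMk hZ).comap_le).aestronglyMeasurable
    (hpt_bdd.mono fun ω h => abs_div_sub_one_sub_div_one_sub_le (hT_bin ω) hε h.1 h.2)

lemma integral_div_sub_one_sub_div_one_sub_mul_eq_zero [IsFiniteMeasure P] (hT : Measurable T)
    (hZ : Measurable Z) (hT_bin : ∀ ω, T ω = 0 ∨ T ω = 1) (hpt : Measurable pt) (hε : 0 < ε)
    (hpt_bdd : ∀ᵐ ω ∂P, ε ≤ pt (Z ω) ∧ pt (Z ω) ≤ 1 - ε) (hV : Integrable V P)
    (hV₀ : P[V|MeasurableSpace.comap (fun ω => (T ω, Z ω)) inferInstance] =ᵐ[P] 0) :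
    ∫ ω, (T ω / pt (Z ω) - (1 - T ω) / (1 - pt (Z ω))) * V ω ∂P = 0 :=
  integral_mul_eq_zero_of_condExp_ae_eq_zero (hT.prodMk hZ).comap_le
    (stronglyMeasurable_comap_div_sub_one_sub_div_one_sub hpt).aestronglyMeasurable
    (integrable_div_sub_one_sub_div_one_sub_mul hT hZ hT_bin hpt hε hpt_bdd hV) hV hV₀

end InverseProbabilityWeight

lemma doubly_robust_label_eq (t y q a g₀ g₁ g₀' g₁' : ℝ) (ht : t = 0 ∨ t = 1) :
    g₁' - g₀' + (t / a - (1 - t) / (1 - a)) * (y - if t = 1 then g₁' else g₀') =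
      g₁ - g₀ + (q / a - 1) * (g₁ - g₁') + (1 - (1 - q) / (1 - a)) * (g₀ - g₀')
        + (t / a - (1 - t) / (1 - a)) * (y - if t = 1 then g₁ else g₀)
        + ((g₁ - g₁') / a + (g₀ - g₀') / (1 - a)) * (t - q) := by
  rcases ht with rfl | rfl <;> norm_num <;> ring

theorem expectation_doubly_robust_label_general
    {Ω : Type*} [MeasurableSpace Ω] (P : Measure Ω) [IsProbabilityMeasure P]
    {𝓩 : Type*} [MeasurableSpace 𝓩]
    (Y T : Ω → ℝ) (Z : Ω → 𝓩)
    (hTm : Measurable T) (hZm : Measurable Z)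
    (hTbin : ∀ ω, T ω = 0 ∨ T ω = 1)
    (g0 g1 p : 𝓩 → ℝ) (hg0m : Measurable g0) (hg1m : Measurable g1)
    (hU : MeasureTheory.condExp
        (MeasurableSpace.comap (fun ω => (T ω, Z ω)) inferInstance) P
        (fun ω => Y ω - (if T ω = 1 then g1 (Z ω) else g0 (Z ω))) =ᵐ[P] 0)
    (hprop : (fun ω => p (Z ω)) =ᵐ[P]
        MeasureTheory.condExp (MeasurableSpace.comap Z inferInstance) P T)
    (gt0 gt1 pt : 𝓩 → ℝ)
    (hgt0m : Measurable gt0) (hgt1m : Measurable gt1) (hptm : Measurable pt)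
    (ε : ℝ) (hε0 : 0 < ε)
    (hptbd : ∀ᵐ ω ∂P, ε ≤ pt (Z ω) ∧ pt (Z ω) ≤ 1 - ε)
    (θ : Ω → ℝ) (hθ : θ = fun ω => g1 (Z ω) - g0 (Z ω))
    (Ht : Ω → ℝ) (hHt : Ht = fun ω => T ω / pt (Z ω) - (1 - T ω) / (1 - pt (Z ω)))
    (c : Ω → ℝ)
    (hc : c = fun ω => gt1 (Z ω) - gt0 (Z ω) +
      Ht ω * (Y ω - (if T ω = 1 then gt1 (Z ω) else gt0 (Z ω))))
    (bias1 bias2 : Ω → ℝ)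
    (hbias1 : bias1 = fun ω => (p (Z ω) / pt (Z ω) - 1) * (g1 (Z ω) - gt1 (Z ω)))
    (hbias2 : bias2 = fun ω =>
      (1 - (1 - p (Z ω)) / (1 - pt (Z ω))) * (g0 (Z ω) - gt0 (Z ω)))
    (hYint : Integrable Y P)
    (hg0int : Integrable (fun ω => g0 (Z ω)) P) (hg1int : Integrable (fun ω => g1 (Z ω)) P)
    (hgt0int : Integrable (fun ω => gt0 (Z ω)) P)
    (hgt1int : Integrable (fun ω => gt1 (Z ω)) P)
    :
    ∫ ω, c ω ∂P = (∫ ω, θ ω ∂P) + (∫ ω, bias1 ω ∂P) + (∫ ω, bias2 ω ∂P) := by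
  have hT_bdd : ∀ᵐ ω ∂P, ‖T ω‖ ≤ 1 :=
    ae_of_all _ fun ω => by rcases hTbin ω with h | h <;> simp [h]
  set e₁ : 𝓩 → ℝ := fun z => (g1 z - gt1 z) / pt z
  set e₀ : 𝓩 → ℝ := fun z => (g0 z - gt0 z) / (1 - pt z)
  have he₁m : Measurable e₁ := by fun_prop
  have he₀m : Measurable e₀ := by fun_prop
  have he₁ : Integrable (fun ω => e₁ (Z ω)) P := (hg1int.sub hgt1int).div_of_le_abs
    (hptm.comp hZm).aestronglyMeasurable hε0 (hptbd.mono fun _ h => le_abs.mpr (.inl h.1))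
  have he₀ : Integrable (fun ω => e₀ (Z ω)) P := (hg0int.sub hgt0int).div_of_le_abs
    (measurable_const.sub (hptm.comp hZm)).aestronglyMeasurable hε0
    (hptbd.mono fun _ h => le_abs.mpr (.inl (by linarith [h.2])))
  have hb₁ : Integrable bias1 P := hbias1 ▸
    ((integrable_comp_mul_of_ae_eq_condExp hTm hT_bdd hprop he₁m he₁).sub
      (hg1int.sub hgt1int)).congr (ae_of_all _ fun ω => by simp only [e₁, Pi.sub_apply]; ring)
  have hb₀ : Integrable bias2 P := hbias2 ▸
    (((hg0int.sub hgt0int).sub he₀).add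
      (integrable_comp_mul_of_ae_eq_condExp hTm hT_bdd hprop he₀m he₀)).congr
      (ae_of_all _ fun ω => by simp only [e₀, Pi.add_apply, Pi.sub_apply]; ring)
  have hθi : Integrable θ P := hθ ▸ hg1int.sub hg0int
  set U : Ω → ℝ := fun ω => Y ω - (if T ω = 1 then g1 (Z ω) else g0 (Z ω))
  have hUi : Integrable U P := hYint.sub <| Integrable.piecewise (s := {ω | T ω = 1})
    (hTm (measurableSet_singleton 1)) hg1int.integrableOn hg0int.integrableOn
  have hHtU : Integrable (Ht * U) P :=
    hHt ▸ integrable_div_sub_one_sub_div_one_sub_mul hTm hZm hTbin hptm hε0 hptbd hUi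
  have hHtU₀ : ∫ ω, (Ht * U) ω ∂P = 0 :=
    hHt ▸ integral_div_sub_one_sub_div_one_sub_mul_eq_zero hTm hZm hTbin hptm hε0 hptbd hUi hU
  have heR := integrable_comp_mul_sub_of_ae_eq_condExp hTm hT_bdd hprop
    (he₁m.add he₀m) (he₁.add he₀)
  have heR₀ := integral_comp_mul_sub_eq_zero_of_ae_eq_condExp hZm hTm hT_bdd hprop
    (he₁m.add he₀m) (he₁.add he₀)
  calc ∫ ω, c ω ∂P
      = ∫ ω, (θ + bias1 + bias2 + Ht * U + fun ω => (e₁ + e₀) (Z ω) * (T ω - p (Z ω))) ω ∂P :=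
        integral_congr_ae (ae_of_all _ fun ω => by
          subst hθ hHt hc hbias1 hbias2
          exact doubly_robust_label_eq _ _ _ _ _ _ _ _ (hTbin ω))
    _ = (∫ ω, θ ω ∂P) + (∫ ω, bias1 ω ∂P) + (∫ ω, bias2 ω ∂P) := by
        rw [integral_add' (((hθi.add hb₁).add hb₀).add hHtU) heR, heR₀,
          integral_add' ((hθi.add hb₁).add hb₀) hHtU, hHtU₀, integral_add' (hθi.add hb₁) hb₀,
          integral_add' hθi hb₁, add_zero, add_zero]

theorem expectation_doubly_robust_label
    {Ω : Type*} [MeasurableSpace Ω] (P : Measure Ω) [IsProbabilityMeasure P]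
    {𝓩 : Type*} [MeasurableSpace 𝓩]
    (Y T : Ω → ℝ) (Z : Ω → 𝓩)
    (hYm : Measurable Y) (hTm : Measurable T) (hZm : Measurable Z)
    (hTbin : ∀ ω, T ω = 0 ∨ T ω = 1)
    (g0 g1 p : 𝓩 → ℝ) (hg0m : Measurable g0) (hg1m : Measurable g1) (hpm : Measurable p)
    (hU : MeasureTheory.condExp
        (MeasurableSpace.comap (fun ω => (T ω, Z ω)) inferInstance) P
        (fun ω => Y ω - (if T ω = 1 then g1 (Z ω) else g0 (Z ω))) =ᵐ[P] 0)
    (hprop : (fun ω => p (Z ω)) =ᵐ[P]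
        MeasureTheory.condExp (MeasurableSpace.comap Z inferInstance) P T)
    (hpbd : ∀ᵐ ω ∂P, 0 < p (Z ω) ∧ p (Z ω) < 1)
    (gt0 gt1 pt : 𝓩 → ℝ)
    (hgt0m : Measurable gt0) (hgt1m : Measurable gt1) (hptm : Measurable pt)
    (ε : ℝ) (hε0 : 0 < ε) (hε1 : ε < 1 / 2)
    (hptbd : ∀ᵐ ω ∂P, ε ≤ pt (Z ω) ∧ pt (Z ω) ≤ 1 - ε)
    (θ : Ω → ℝ) (hθ : θ = fun ω => g1 (Z ω) - g0 (Z ω))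
    (Ht : Ω → ℝ) (hHt : Ht = fun ω => T ω / pt (Z ω) - (1 - T ω) / (1 - pt (Z ω)))
    (c : Ω → ℝ)
    (hc : c = fun ω => gt1 (Z ω) - gt0 (Z ω) +
      Ht ω * (Y ω - (if T ω = 1 then gt1 (Z ω) else gt0 (Z ω))))
    (bias1 bias2 : Ω → ℝ)
    (hbias1 : bias1 = fun ω => (p (Z ω) / pt (Z ω) - 1) * (g1 (Z ω) - gt1 (Z ω)))
    (hbias2 : bias2 = fun ω =>
      (1 - (1 - p (Z ω)) / (1 - pt (Z ω))) * (g0 (Z ω) - gt0 (Z ω)))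
    (hYint : Integrable Y P)
    (hg0int : Integrable (fun ω => g0 (Z ω)) P) (hg1int : Integrable (fun ω => g1 (Z ω)) P)
    (hgt0int : Integrable (fun ω => gt0 (Z ω)) P)
    (hgt1int : Integrable (fun ω => gt1 (Z ω)) P)
    :
    ∫ ω, c ω ∂P = (∫ ω, θ ω ∂P) + (∫ ω, bias1 ω ∂P) + (∫ ω, bias2 ω ∂P) :=
  expectation_doubly_robust_label_general P Y T Z hTm hZm hTbin g0 g1 p hg0m hg1m hU hprop gt0 gt1
    pt hgt0m hgt1m hptm ε hε0 hptbd θ hθ Ht hHt c hc bias1 bias2 hbias1 hbias2 hYint hg0int hg1int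
    hgt0int hgt1int
end

section
/- (Double robustness in the outcome models.) Under the IRM with ML proxies, if additionally g̃_1(Z) = g_1(Z) and g̃_0(Z) = g_0(Z) almost surely, then bias₁ = 0 and bias₂ = 0 almost surely, and consequently the linear-projection coefficients of c(η̃) on (1, θ̃(Z) − E[θ̃(Z)]) equal (a₁, b₁) = (E[θ(Z)], Cov(θ(Z), θ̃(Z))/Var(θ̃(Z))), i.e., the coefficients of the best linear predictor of θ(Z) by θ̃(Z). -/
open MeasureTheory ProbabilityTheory

/-!
With correct outcome proxies the doubly robust label is `c = θ̃ + H̃ · R` with `R = Y - g̃_T`,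
and `R` agrees a.e. with the IRM noise `U`, so `E[R | T, Z] = 0`. Since `H̃` and `θ̃` are
functions of `(T, Z)`, the term `H̃ · R` is conditionally mean zero as well: it has mean zero
and is uncorrelated with `θ̃`. Adding it to `θ̃` therefore leaves the solution of the normal
equations at the coefficients of `θ̃` on itself, `(E θ̃, 1)`, and `θ̃ = θ` a.e.
-/

theorem normal_equations_solution_eq {Ω : Type*} [MeasurableSpace Ω] {P : Measure Ω}
    [IsProbabilityMeasure P] {c f : Ω → ℝ} (hc : MemLp c 2 P) (hf : MemLp f 2 P)
    (hvar : cov[f, f; P] ≠ 0) {a b : ℝ}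
    (h₀ : ∫ ω, (c ω - a - b * (f ω - ∫ m, f m ∂P)) ∂P = 0)
    (h₁ : ∫ ω, (c ω - a - b * (f ω - ∫ m, f m ∂P)) * (f ω - ∫ m, f m ∂P) ∂P = 0) :
    a = ∫ ω, c ω ∂P ∧ b = cov[c, f; P] / cov[f, f; P] := by
  set X : Ω → ℝ := fun ω => f ω - ∫ m, f m ∂P
  have hX : MemLp X 2 P := hf.sub (memLp_const _)
  have hXint : Integrable X P := hX.integrable one_le_two
  have hcint : Integrable c P := hc.integrable one_le_two
  have hXmean : ∫ ω, X ω ∂P = 0 := by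
    rw [integral_sub (hf.integrable one_le_two) (integrable_const _)]
    simp
  have ha : a = ∫ ω, c ω ∂P := by
    rw [integral_sub (f := fun ω => c ω - a) (hcint.sub (integrable_const a))
      (hXint.const_mul b), integral_sub hcint (integrable_const a), integral_const_mul,
      hXmean] at h₀
    simpa [sub_eq_zero, eq_comm] using h₀
  refine ⟨ha, ?_⟩
  subst ha
  have hsplit : (fun ω => (c ω - ∫ m, c m ∂P - b * X ω) * X ω) =
      fun ω => (c ω - ∫ m, c m ∂P) * X ω - b * (X ω * X ω) := by
    funext ω; ring
  rw [hsplit, integral_sub (f := fun ω => (c ω - ∫ m, c m ∂P) * X ω)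
    ((hc.sub (memLp_const _)).integrable_mul hX)
    ((hX.integrable_mul hX).const_mul b (f := fun ω => X ω * X ω)), integral_const_mul] at h₁
  rw [eq_div_iff hvar]
  show b * ∫ ω, X ω * X ω ∂P = ∫ ω, (c ω - ∫ m, c m ∂P) * X ω ∂P
  linarith

theorem stronglyMeasurable_comap_comp {Ω β : Type*} [MeasurableSpace β] {f : Ω → β}
    {φ : β → ℝ} (hφ : Measurable φ) :
    StronglyMeasurable[MeasurableSpace.comap f inferInstance] fun ω => φ (f ω) :=
  (hφ.comp (comap_measurable f)).stronglyMeasurable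

section ConditionalMeanZero

variable {Ω : Type*} {m mΩ : MeasurableSpace Ω} {P : Measure Ω} {U V : Ω → ℝ}

theorem condExp_mul_eq_zero_of_condExp_eq_zero (hV : StronglyMeasurable[m] V)
    (hVU : Integrable (V * U) P) (hU : Integrable U P) (h : P[U|m] =ᵐ[P] 0) :
    P[V * U|m] =ᵐ[P] 0 := by
  filter_upwards [condExp_mul_of_stronglyMeasurable_left hV hVU hU, h] with ω hω h0
  simp [hω, h0]

theorem integral_eq_zero_of_condExp_eq_zero [IsFiniteMeasure P] (hm : m ≤ mΩ)
    (h : P[U|m] =ᵐ[P] 0) : ∫ ω, U ω ∂P = 0 := by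
  rw [← integral_condExp hm, integral_congr_ae h, integral_zero']

theorem covariance_eq_zero_of_condExp_eq_zero [IsProbabilityMeasure P] (hm : m ≤ mΩ)
    (hU : MemLp U 2 P) (h : P[U|m] =ᵐ[P] 0) {f : Ω → ℝ} (hf : MemLp f 2 P)
    (hfm : StronglyMeasurable[m] f) : cov[U, f; P] = 0 := by
  set X : Ω → ℝ := fun ω => f ω - ∫ m, f m ∂P
  have hX : MemLp X 2 P := hf.sub (memLp_const _)
  have hXm : StronglyMeasurable[m] X := hfm.sub stronglyMeasurable_const
  have hXU : ∫ ω, X ω * U ω ∂P = 0 :=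
    integral_eq_zero_of_condExp_eq_zero hm <| condExp_mul_eq_zero_of_condExp_eq_zero hXm
      (hX.integrable_mul hU) (hU.integrable one_le_two) h
  calc cov[U, f; P] = ∫ ω, X ω * U ω ∂P := by
        rw [covariance, integral_eq_zero_of_condExp_eq_zero hm h]
        simp only [X, sub_zero, mul_comm]
    _ = 0 := hXU

theorem covariance_congr_ae_left {X X' Y : Ω → ℝ} (h : X =ᵐ[P] X') :
    cov[X, Y; P] = cov[X', Y; P] := by
  rw [covariance, covariance, integral_congr_ae h]
  exact integral_congr_ae (by filter_upwards [h] with ω hω; rw [hω])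

theorem normal_equations_solution_add_of_condExp_eq_zero [IsProbabilityMeasure P]
    (hm : m ≤ mΩ) {f W : Ω → ℝ} (hf : MemLp f 2 P) (hfm : StronglyMeasurable[m] f)
    (hW : MemLp W 2 P) (hWm : P[W|m] =ᵐ[P] 0) (hvar : cov[f, f; P] ≠ 0) {a b : ℝ}
    (h₀ : ∫ ω, (f ω + W ω - a - b * (f ω - ∫ m, f m ∂P)) ∂P = 0)
    (h₁ : ∫ ω, (f ω + W ω - a - b * (f ω - ∫ m, f m ∂P)) * (f ω - ∫ m, f m ∂P) ∂P = 0) :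
    a = ∫ ω, f ω ∂P ∧ b = 1 := by
  obtain ⟨ha, hb⟩ := normal_equations_solution_eq (hf.add hW) hf hvar h₀ h₁
  refine ⟨?_, ?_⟩
  · rw [ha, integral_add' (hf.integrable one_le_two) (hW.integrable one_le_two),
      integral_eq_zero_of_condExp_eq_zero hm hWm, add_zero]
  · rw [hb, covariance_add_left hf hW hf,
      covariance_eq_zero_of_condExp_eq_zero hm hW hWm hf hfm, add_zero, div_self hvar]

end ConditionalMeanZero

section InteractiveRegression

variable {Ω 𝓩 : Type*} [MeasurableSpace Ω] [MeasurableSpace 𝓩] {P : Measure Ω}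
  {T : Ω → ℝ} {Z : Ω → 𝓩}

theorem abs_ipw_weight_le {t q ε : ℝ} (ht : t = 0 ∨ t = 1) (hε : 0 < ε)
    (hq : ε ≤ q ∧ q ≤ 1 - ε) : |t / q - (1 - t) / (1 - q)| ≤ 1 / ε := by
  obtain ⟨hlo, hhi⟩ := hq
  rcases ht with rfl | rfl
  · rw [zero_div, zero_sub, sub_zero, abs_neg, abs_of_pos (by bound)]
    exact one_div_le_one_div_of_le hε (by linarith)
  · rw [sub_self, zero_div, sub_zero, abs_of_pos (by bound)]
    exact one_div_le_one_div_of_le hε hlo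

theorem memLp_ite_treatment (hT : Measurable T) {f₀ f₁ : Ω → ℝ} {p : ENNReal}
    (hf₀ : MemLp f₀ p P) (hf₁ : MemLp f₁ p P) :
    MemLp (fun ω => if T ω = 1 then f₁ ω else f₀ ω) p P :=
  MemLp.piecewise (s := {ω | T ω = 1}) (hT (measurableSet_singleton 1)) (hf₁.restrict _)
    (hf₀.restrict _)

theorem memLp_top_ipw_weight (hT : Measurable T) (hZ : Measurable Z)
    (hTbin : ∀ ω, T ω = 0 ∨ T ω = 1) {pt : 𝓩 → ℝ} (hpt : Measurable pt) {ε : ℝ}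
    (hε : 0 < ε) (hptbd : ∀ᵐ ω ∂P, ε ≤ pt (Z ω) ∧ pt (Z ω) ≤ 1 - ε) :
    MemLp (fun ω => T ω / pt (Z ω) - (1 - T ω) / (1 - pt (Z ω))) ⊤ P := by
  refine memLp_top_of_bound (by fun_prop) (1 / ε) ?_
  filter_upwards [hptbd] with ω hω
  exact abs_ipw_weight_le (hTbin ω) hε hω

end InteractiveRegression

theorem double_robustness_outcomes_general
    {Ω : Type*} [MeasurableSpace Ω] (P : Measure Ω) [IsProbabilityMeasure P]
    {𝓩 : Type*} [MeasurableSpace 𝓩]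
    (Y T : Ω → ℝ) (Z : Ω → 𝓩)
    (hTm : Measurable T) (hZm : Measurable Z)
    (hTbin : ∀ ω, T ω = 0 ∨ T ω = 1)
    (g0 g1 p : 𝓩 → ℝ)
    (hU : MeasureTheory.condExp
        (MeasurableSpace.comap (fun ω => (T ω, Z ω)) inferInstance) P
        (fun ω => Y ω - (if T ω = 1 then g1 (Z ω) else g0 (Z ω))) =ᵐ[P] 0)
    (gt0 gt1 pt : 𝓩 → ℝ)
    (hgt0m : Measurable gt0) (hgt1m : Measurable gt1) (hptm : Measurable pt)
    (ε : ℝ) (hε0 : 0 < ε)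
    (hptbd : ∀ᵐ ω ∂P, ε ≤ pt (Z ω) ∧ pt (Z ω) ≤ 1 - ε)
    (θ : Ω → ℝ) (hθ : θ = fun ω => g1 (Z ω) - g0 (Z ω))
    (θt : Ω → ℝ) (hθt : θt = fun ω => gt1 (Z ω) - gt0 (Z ω))
    (Ht : Ω → ℝ) (hHt : Ht = fun ω => T ω / pt (Z ω) - (1 - T ω) / (1 - pt (Z ω)))
    (c : Ω → ℝ)
    (hc : c = fun ω => gt1 (Z ω) - gt0 (Z ω) +
      Ht ω * (Y ω - (if T ω = 1 then gt1 (Z ω) else gt0 (Z ω))))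
    (bias1 bias2 : Ω → ℝ)
    (hbias1 : bias1 = fun ω => (p (Z ω) / pt (Z ω) - 1) * (g1 (Z ω) - gt1 (Z ω)))
    (hbias2 : bias2 = fun ω =>
      (1 - (1 - p (Z ω)) / (1 - pt (Z ω))) * (g0 (Z ω) - gt0 (Z ω)))
    (cov : (Ω → ℝ) → (Ω → ℝ) → ℝ)
    (hcov : ∀ f g : Ω → ℝ, cov f g =
      ∫ ω, (f ω - ∫ m, f m ∂P) * (g ω - ∫ m, g m ∂P) ∂P)
    (hY2 : MemLp Y 2 P)
    (hgt02 : MemLp (fun ω => gt0 (Z ω)) 2 P) (hgt12 : MemLp (fun ω => gt1 (Z ω)) 2 P)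
    (hvar : 0 < cov θt θt)
    (hg1eq : (fun ω => gt1 (Z ω)) =ᵐ[P] (fun ω => g1 (Z ω)))
    (hg0eq : (fun ω => gt0 (Z ω)) =ᵐ[P] (fun ω => g0 (Z ω)))
    :
    (bias1 =ᵐ[P] 0) ∧ (bias2 =ᵐ[P] 0) ∧
    (∀ a b : ℝ,
      ((∫ ω, (c ω - a - b * (θt ω - ∫ m, θt m ∂P)) ∂P = 0) ∧
        (∫ ω, (c ω - a - b * (θt ω - ∫ m, θt m ∂P)) * (θt ω - ∫ m, θt m ∂P) ∂P = 0))
      → (a = ∫ ω, θ ω ∂P ∧ b = cov θ θt / cov θt θt)) := by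
  refine ⟨?_, ?_, fun a b ⟨h₀, h₁⟩ => ?_⟩
  · filter_upwards [hg1eq] with ω h
    simp [hbias1, h]
  · filter_upwards [hg0eq] with ω h
    simp [hbias2, h]
  have hm : MeasurableSpace.comap (fun ω => (T ω, Z ω)) inferInstance ≤ ‹MeasurableSpace Ω› :=
    (hTm.prodMk hZm).comap_le
  set R : Ω → ℝ := fun ω => Y ω - if T ω = 1 then gt1 (Z ω) else gt0 (Z ω)
  have hR : MemLp R 2 P := hY2.sub (memLp_ite_treatment hTm hgt02 hgt12)
  have hRU : R =ᵐ[P] fun ω => Y ω - if T ω = 1 then g1 (Z ω) else g0 (Z ω) := by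
    filter_upwards [hg1eq, hg0eq] with ω h₁ h₀
    simp only [R, h₁, h₀]
  have hRm := (condExp_congr_ae hRU).trans hU
  have hW : MemLp (Ht * R) 2 P :=
    hR.mul (hHt ▸ memLp_top_ipw_weight hTm hZm hTbin hptm hε0 hptbd)
  have hWm := condExp_mul_eq_zero_of_condExp_eq_zero (hHt ▸ stronglyMeasurable_comap_comp
      (φ := fun q : ℝ × 𝓩 => q.1 / pt q.2 - (1 - q.1) / (1 - pt q.2)) (by fun_prop))
      (hW.integrable one_le_two) (hR.integrable one_le_two) hRm
  have hθtm := hθt ▸ stronglyMeasurable_comap_comp (f := fun ω => (T ω, Z ω))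
    (φ := fun q : ℝ × 𝓩 => gt1 q.2 - gt0 q.2) (by fun_prop)
  have hcW : c = θt + Ht * R := by rw [hc, hθt]; rfl
  have hθθt : θ =ᵐ[P] θt := by
    filter_upwards [hg1eq, hg0eq] with ω h₁ h₀
    simp only [hθ, hθt, h₁, h₀]
  have hcov' : ∀ f g, cov f g = cov[f, g; P] := hcov
  rw [hcov'] at hvar
  rw [hcW] at h₀ h₁
  obtain ⟨ha, hb⟩ := normal_equations_solution_add_of_condExp_eq_zero hm (hθt ▸ hgt12.sub hgt02)
    hθtm hW hWm hvar.ne' h₀ h₁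
  exact ⟨ha.trans (integral_congr_ae hθθt).symm,
    by rw [hb, hcov', hcov', covariance_congr_ae_left hθθt, div_self hvar.ne']⟩

theorem double_robustness_outcomes
    {Ω : Type*} [MeasurableSpace Ω] (P : Measure Ω) [IsProbabilityMeasure P]
    {𝓩 : Type*} [MeasurableSpace 𝓩]
    (Y T : Ω → ℝ) (Z : Ω → 𝓩)
    (hYm : Measurable Y) (hTm : Measurable T) (hZm : Measurable Z)
    (hTbin : ∀ ω, T ω = 0 ∨ T ω = 1)
    (g0 g1 p : 𝓩 → ℝ) (hg0m : Measurable g0) (hg1m : Measurable g1) (hpm : Measurable p)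
    (hU : MeasureTheory.condExp
        (MeasurableSpace.comap (fun ω => (T ω, Z ω)) inferInstance) P
        (fun ω => Y ω - (if T ω = 1 then g1 (Z ω) else g0 (Z ω))) =ᵐ[P] 0)
    (hprop : (fun ω => p (Z ω)) =ᵐ[P]
        MeasureTheory.condExp (MeasurableSpace.comap Z inferInstance) P T)
    (hpbd : ∀ᵐ ω ∂P, 0 < p (Z ω) ∧ p (Z ω) < 1)
    (gt0 gt1 pt : 𝓩 → ℝ)
    (hgt0m : Measurable gt0) (hgt1m : Measurable gt1) (hptm : Measurable pt)
    (ε : ℝ) (hε0 : 0 < ε) (hε1 : ε < 1 / 2)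
    (hptbd : ∀ᵐ ω ∂P, ε ≤ pt (Z ω) ∧ pt (Z ω) ≤ 1 - ε)
    (θ : Ω → ℝ) (hθ : θ = fun ω => g1 (Z ω) - g0 (Z ω))
    (θt : Ω → ℝ) (hθt : θt = fun ω => gt1 (Z ω) - gt0 (Z ω))
    (Ht : Ω → ℝ) (hHt : Ht = fun ω => T ω / pt (Z ω) - (1 - T ω) / (1 - pt (Z ω)))
    (c : Ω → ℝ)
    (hc : c = fun ω => gt1 (Z ω) - gt0 (Z ω) +
      Ht ω * (Y ω - (if T ω = 1 then gt1 (Z ω) else gt0 (Z ω))))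
    (bias1 bias2 : Ω → ℝ)
    (hbias1 : bias1 = fun ω => (p (Z ω) / pt (Z ω) - 1) * (g1 (Z ω) - gt1 (Z ω)))
    (hbias2 : bias2 = fun ω =>
      (1 - (1 - p (Z ω)) / (1 - pt (Z ω))) * (g0 (Z ω) - gt0 (Z ω)))
    (cov : (Ω → ℝ) → (Ω → ℝ) → ℝ)
    (hcov : ∀ f g : Ω → ℝ, cov f g =
      ∫ ω, (f ω - ∫ m, f m ∂P) * (g ω - ∫ m, g m ∂P) ∂P)
    (hY2 : MemLp Y 2 P)
    (hg02 : MemLp (fun ω => g0 (Z ω)) 2 P) (hg12 : MemLp (fun ω => g1 (Z ω)) 2 P)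
    (hgt02 : MemLp (fun ω => gt0 (Z ω)) 2 P) (hgt12 : MemLp (fun ω => gt1 (Z ω)) 2 P)
    (hvar : 0 < cov θt θt)
    (hg1eq : (fun ω => gt1 (Z ω)) =ᵐ[P] (fun ω => g1 (Z ω)))
    (hg0eq : (fun ω => gt0 (Z ω)) =ᵐ[P] (fun ω => g0 (Z ω)))
    :
    (bias1 =ᵐ[P] 0) ∧ (bias2 =ᵐ[P] 0) ∧
    (∀ a b : ℝ,
      ((∫ ω, (c ω - a - b * (θt ω - ∫ m, θt m ∂P)) ∂P = 0) ∧
        (∫ ω, (c ω - a - b * (θt ω - ∫ m, θt m ∂P)) * (θt ω - ∫ m, θt m ∂P) ∂P = 0))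
      → (a = ∫ ω, θ ω ∂P ∧ b = cov θ θt / cov θt θt)) :=
  double_robustness_outcomes_general P Y T Z hTm hZm hTbin g0 g1 p hU gt0 gt1 pt hgt0m hgt1m hptm ε
    hε0 hptbd θ hθ θt hθt Ht hHt c hc bias1 bias2 hbias1 hbias2 cov hcov hY2 hgt02 hgt12 hvar hg1eq
    hg0eq
end

section
/- (Conditional mean-zero property of the true doubly robust correction.) Under the IRM, assume δ ≤ μ(Z) ≤ 1 − δ almost surely for some δ ∈ (0, 1/2), define H := T/μ(Z) − (1 − T)/(1 − μ(Z)), and assume Y, g_0(Z), g_1(Z) are integrable. Then E[(Y − g_T(Z))·H | σ(Z)] = 0 almost surely. -/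
/-!
With `U = Y - g_T(Z)`, the weight `H` is a function of `(T, Z)`, so the tower property gives
`E[U H | Z] = E[E[U | T, Z] H | Z] = 0`.
-/

open MeasureTheory ProbabilityTheory

section

variable {Ω : Type*} {m m₂ m₀ : MeasurableSpace Ω} {μ : Measure Ω}

theorem condExp_mul_eq_zero_of_condExp_eq_zero_s11 (hm : m ≤ m₂) (hm₂ : m₂ ≤ m₀)
    [SigmaFinite (μ.trim hm₂)]
    {f g : Ω → ℝ} (hf : Integrable f μ) (hg : AEStronglyMeasurable[m₂] g μ)
    (hf₀ : μ[f | m₂] =ᵐ[μ] 0) : μ[f * g | m] =ᵐ[μ] 0 := by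
  by_cases hfg : Integrable (f * g) μ
  swap
  · rw [condExp_of_not_integrable hfg]
  have h₂ : μ[f * g | m₂] =ᵐ[μ] 0 := by
    filter_upwards [condExp_mul_of_aestronglyMeasurable_right hg hfg hf, hf₀] with ω hω h₀
    simp [hω, h₀]
  calc μ[f * g | m] =ᵐ[μ] μ[μ[f * g | m₂] | m] := (condExp_condExp_of_le hm hm₂).symm
    _ =ᵐ[μ] μ[0 | m] := condExp_congr_ae h₂
    _ = 0 := condExp_zero

end

theorem comap_le_comap_prodMk_right {Ω α β : Type*} [MeasurableSpace α] [MeasurableSpace β]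
    (X : Ω → α) (Z : Ω → β) :
    MeasurableSpace.comap Z inferInstance ≤
      MeasurableSpace.comap (fun ω => (X ω, Z ω)) inferInstance :=
  Measurable.comap_le (measurable_snd.comp (comap_measurable (fun ω => (X ω, Z ω))))

theorem true_doubly_robust_correction_condexp_zero_general
    {Ω : Type*} [MeasurableSpace Ω] (P : Measure Ω) [IsProbabilityMeasure P]
    {𝓩 : Type*} [MeasurableSpace 𝓩]
    (Y T : Ω → ℝ) (Z : Ω → 𝓩)
    (hTm : Measurable T) (hZm : Measurable Z)
    (g0 g1 p : 𝓩 → ℝ) (hpm : Measurable p)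
    (hU : MeasureTheory.condExp
        (MeasurableSpace.comap (fun ω => (T ω, Z ω)) inferInstance) P
        (fun ω => Y ω - (if T ω = 1 then g1 (Z ω) else g0 (Z ω))) =ᵐ[P] 0)
    (H : Ω → ℝ)
    (hH : H = fun ω => T ω / p (Z ω) - (1 - T ω) / (1 - p (Z ω)))
    (hYint : Integrable Y P)
    (hg0int : Integrable (fun ω => g0 (Z ω)) P) (hg1int : Integrable (fun ω => g1 (Z ω)) P)
    :
    MeasureTheory.condExp (MeasurableSpace.comap Z inferInstance) P
      (fun ω => (Y ω - (if T ω = 1 then g1 (Z ω) else g0 (Z ω))) * H ω) =ᵐ[P] 0 := by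
  have hTZ : Measurable[MeasurableSpace.comap (fun ω => (T ω, Z ω)) inferInstance]
      (fun ω => (T ω, Z ω)) := comap_measurable _
  have hH_meas : Measurable[MeasurableSpace.comap (fun ω => (T ω, Z ω)) inferInstance] H := by
    have hT := measurable_fst.comp hTZ
    have hpZ := (hpm.comp measurable_snd).comp hTZ
    rw [hH]
    exact (hT.div hpZ).sub ((measurable_const.sub hT).div (measurable_const.sub hpZ))
  have hUint : Integrable (fun ω => Y ω - (if T ω = 1 then g1 (Z ω) else g0 (Z ω))) P :=
    hYint.sub <| Integrable.piecewise (s := {ω | T ω = 1}) (hTm (measurableSet_singleton 1))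
      hg1int.integrableOn hg0int.integrableOn
  exact condExp_mul_eq_zero_of_condExp_eq_zero_s11 (comap_le_comap_prodMk_right T Z)
    (hTm.prodMk hZm).comap_le hUint hH_meas.aestronglyMeasurable hU

theorem true_doubly_robust_correction_condexp_zero
    {Ω : Type*} [MeasurableSpace Ω] (P : Measure Ω) [IsProbabilityMeasure P]
    {𝓩 : Type*} [MeasurableSpace 𝓩]
    (Y T : Ω → ℝ) (Z : Ω → 𝓩)
    (hYm : Measurable Y) (hTm : Measurable T) (hZm : Measurable Z)
    (hTbin : ∀ ω, T ω = 0 ∨ T ω = 1)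
    (g0 g1 p : 𝓩 → ℝ) (hg0m : Measurable g0) (hg1m : Measurable g1) (hpm : Measurable p)
    (hU : MeasureTheory.condExp
        (MeasurableSpace.comap (fun ω => (T ω, Z ω)) inferInstance) P
        (fun ω => Y ω - (if T ω = 1 then g1 (Z ω) else g0 (Z ω))) =ᵐ[P] 0)
    (hprop : (fun ω => p (Z ω)) =ᵐ[P]
        MeasureTheory.condExp (MeasurableSpace.comap Z inferInstance) P T)
    (hpbd : ∀ᵐ ω ∂P, 0 < p (Z ω) ∧ p (Z ω) < 1)
    (δ : ℝ) (hδ0 : 0 < δ) (hδ1 : δ < 1 / 2)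
    (hpδ : ∀ᵐ ω ∂P, δ ≤ p (Z ω) ∧ p (Z ω) ≤ 1 - δ)
    (H : Ω → ℝ)
    (hH : H = fun ω => T ω / p (Z ω) - (1 - T ω) / (1 - p (Z ω)))
    (hYint : Integrable Y P)
    (hg0int : Integrable (fun ω => g0 (Z ω)) P) (hg1int : Integrable (fun ω => g1 (Z ω)) P)
    :
    MeasureTheory.condExp (MeasurableSpace.comap Z inferInstance) P
      (fun ω => (Y ω - (if T ω = 1 then g1 (Z ω) else g0 (Z ω))) * H ω) =ᵐ[P] 0 :=
  true_doubly_robust_correction_condexp_zero_general P Y T Z hTm hZm g0 g1 p hpm hU H hH hYint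
    hg0int hg1int
end

section
/- (Population identification of the GATE score with true nuisances.) Under the IRM, assume δ ≤ μ(Z) ≤ 1 − δ almost surely for some δ ∈ (0, 1/2), define H := T/μ(Z) − (1 − T)/(1 − μ(Z)), let G ⊆ 𝒵 be a measurable set with P(Z ∈ G) > 0, and assume Y, g_0(Z), g_1(Z) are integrable. Then E[(𝟙(Z ∈ G)/P(Z ∈ G))·(g_1(Z) − g_0(Z) + (Y − g_T(Z))·H)] = E[θ(Z) | Z ∈ G], i.e., the population version of the doubly robust GATE score with true nuisance functions identifies the group average treatment effect θ_G := E[g_1(Z) − g_0(Z) | Z ∈ G]. -/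
/-!
With `c = P(Z ∈ G)` and `U = Y - g_T(Z)`, the score equals `c⁻¹ (𝟙_G(Z) θ + 𝟙_G(Z) H U)`.
Overlap makes the weight `𝟙_G(Z) H` a bounded (by `δ⁻¹`) function of `(T, Z)`, so pulling it
out of `E[· | T, Z]` and using `E[U | T, Z] = 0` kills the second term; the first term integrates
to `E[θ | Z ∈ G]` by the definition of the conditional measure.
-/

open MeasureTheory ProbabilityTheory

theorem integral_mul_eq_zero_of_condExp_comap_eq_zero {Ω β : Type*} {mΩ : MeasurableSpace Ω}
    [mβ : MeasurableSpace β] {μ : Measure Ω} [IsFiniteMeasure μ]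
    {X : Ω → β} (hX : Measurable X) {φ : β → ℝ} (hφ : Measurable φ)
    {U : Ω → ℝ} (hU : Integrable U μ) (hφU : Integrable (fun ω => φ (X ω) * U ω) μ)
    (hU0 : μ[U | mβ.comap X] =ᵐ[μ] 0) :
    ∫ ω, φ (X ω) * U ω ∂μ = 0 := by
  have hφX : StronglyMeasurable[mβ.comap X] (φ ∘ X) :=
    (hφ.comp (comap_measurable X)).stronglyMeasurable
  have hφU0 : μ[(φ ∘ X) * U | mβ.comap X] =ᵐ[μ] 0 := by
    filter_upwards [condExp_mul_of_stronglyMeasurable_left hφX hφU hU, hU0] with ω h h0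
    simp [h, h0]
  rw [← integral_condExp hX.comap_le]
  exact (integral_congr_ae hφU0).trans (integral_zero' Ω ℝ)

theorem integral_cond {Ω : Type*} [MeasurableSpace Ω] (μ : Measure Ω) (s : Set Ω)
    (f : Ω → ℝ) :
    ∫ ω, f ω ∂μ[|s] = (μ s).toReal⁻¹ * ∫ ω in s, f ω ∂μ := by
  rw [ProbabilityTheory.cond, integral_smul_measure, ENNReal.toReal_inv, smul_eq_mul]

theorem abs_div_sub_one_sub_div_le_inv {t q δ : ℝ} (ht : t = 0 ∨ t = 1) (hδ : 0 < δ)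
    (hδq : δ ≤ q) (hq : q ≤ 1 - δ) : |t / q - (1 - t) / (1 - q)| ≤ δ⁻¹ := by
  rcases ht with rfl | rfl
  · rw [zero_div, zero_sub, sub_zero, one_div, abs_neg, abs_of_pos (inv_pos.2 (by linarith))]
    exact inv_anti₀ hδ (by linarith)
  · rw [sub_self, zero_div, sub_zero, one_div, abs_of_pos (inv_pos.2 (by linarith))]
    exact inv_anti₀ hδ hδq

theorem gate_score_identification_general
    {Ω : Type*} [MeasurableSpace Ω] (P : Measure Ω) [IsProbabilityMeasure P]
    {𝓩 : Type*} [MeasurableSpace 𝓩]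
    (Y T : Ω → ℝ) (Z : Ω → 𝓩)
    (hTm : Measurable T) (hZm : Measurable Z)
    (hTbin : ∀ ω, T ω = 0 ∨ T ω = 1)
    (g0 g1 p : 𝓩 → ℝ) (hpm : Measurable p)
    (hU : MeasureTheory.condExp
        (MeasurableSpace.comap (fun ω => (T ω, Z ω)) inferInstance) P
        (fun ω => Y ω - (if T ω = 1 then g1 (Z ω) else g0 (Z ω))) =ᵐ[P] 0)
    (θ : Ω → ℝ) (hθ : θ = fun ω => g1 (Z ω) - g0 (Z ω))
    (δ : ℝ) (hδ0 : 0 < δ)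
    (hpδ : ∀ᵐ ω ∂P, δ ≤ p (Z ω) ∧ p (Z ω) ≤ 1 - δ)
    (H : Ω → ℝ)
    (hH : H = fun ω => T ω / p (Z ω) - (1 - T ω) / (1 - p (Z ω)))
    (G : Set 𝓩) (hGm : MeasurableSet G)
    (hYint : Integrable Y P)
    (hg0int : Integrable (fun ω => g0 (Z ω)) P) (hg1int : Integrable (fun ω => g1 (Z ω)) P)
    :
    ∫ ω, (Set.indicator G (fun _ => (1 : ℝ)) (Z ω) / (P {ω | Z ω ∈ G}).toReal) *
        (g1 (Z ω) - g0 (Z ω) +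
          (Y ω - (if T ω = 1 then g1 (Z ω) else g0 (Z ω))) * H ω) ∂P =
      ∫ ω, θ ω ∂(ProbabilityTheory.cond P {ω | Z ω ∈ G}) := by
  subst hθ hH
  set S := {ω | Z ω ∈ G}
  have hSm : MeasurableSet S := hZm hGm
  set U := fun ω => Y ω - (if T ω = 1 then g1 (Z ω) else g0 (Z ω))
  set φ : ℝ × 𝓩 → ℝ :=
    (Set.univ ×ˢ G).indicator fun x => x.1 / p x.2 - (1 - x.1) / (1 - p x.2) with hφ
  have hφm : Measurable φ := Measurable.indicator (by fun_prop) (MeasurableSet.univ.prod hGm)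
  have hφbdd : ∀ᵐ ω ∂P, ‖φ (T ω, Z ω)‖ ≤ δ⁻¹ := by
    filter_upwards [hpδ] with ω hω
    exact (norm_indicator_le_norm_self _ _).trans
      (abs_div_sub_one_sub_div_le_inv (hTbin ω) hδ0 hω.1 hω.2)
  have hUint : Integrable U P :=
    hYint.sub (Integrable.piecewise (s := {ω | T ω = 1}) (hTm (measurableSet_singleton 1))
      hg1int.integrableOn hg0int.integrableOn)
  have hφUint : Integrable (fun ω => φ (T ω, Z ω) * U ω) P :=
    hUint.bdd_mul (hφm.comp (hTm.prodMk hZm)).aestronglyMeasurable hφbdd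
  have hθint : Integrable (S.indicator fun ω => g1 (Z ω) - g0 (Z ω)) P :=
    (hg1int.sub hg0int).indicator hSm
  have hscore : ∀ ω, Set.indicator G (fun _ => (1 : ℝ)) (Z ω) / (P S).toReal *
      (g1 (Z ω) - g0 (Z ω) + U ω * (T ω / p (Z ω) - (1 - T ω) / (1 - p (Z ω)))) =
      (P S).toReal⁻¹ *
        (S.indicator (fun ω => g1 (Z ω) - g0 (Z ω)) ω + φ (T ω, Z ω) * U ω) := by
    intro ω
    by_cases hω : Z ω ∈ G <;>
      simp only [S, hφ, Set.indicator, Set.mem_ofPred_eq, Set.mem_prod, Set.mem_univ, true_and,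
        hω, if_true, if_false] <;>
      ring
  refine (integral_congr_ae (ae_of_all _ hscore)).trans ?_
  rw [integral_const_mul, integral_add hθint hφUint,
    integral_mul_eq_zero_of_condExp_comap_eq_zero (hTm.prodMk hZm) hφm hUint hφUint hU,
    add_zero, integral_indicator hSm, integral_cond]

theorem gate_score_identification
    {Ω : Type*} [MeasurableSpace Ω] (P : Measure Ω) [IsProbabilityMeasure P]
    {𝓩 : Type*} [MeasurableSpace 𝓩]
    (Y T : Ω → ℝ) (Z : Ω → 𝓩)
    (hYm : Measurable Y) (hTm : Measurable T) (hZm : Measurable Z)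
    (hTbin : ∀ ω, T ω = 0 ∨ T ω = 1)
    (g0 g1 p : 𝓩 → ℝ) (hg0m : Measurable g0) (hg1m : Measurable g1) (hpm : Measurable p)
    (hU : MeasureTheory.condExp
        (MeasurableSpace.comap (fun ω => (T ω, Z ω)) inferInstance) P
        (fun ω => Y ω - (if T ω = 1 then g1 (Z ω) else g0 (Z ω))) =ᵐ[P] 0)
    (hprop : (fun ω => p (Z ω)) =ᵐ[P]
        MeasureTheory.condExp (MeasurableSpace.comap Z inferInstance) P T)
    (hpbd : ∀ᵐ ω ∂P, 0 < p (Z ω) ∧ p (Z ω) < 1)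
    (θ : Ω → ℝ) (hθ : θ = fun ω => g1 (Z ω) - g0 (Z ω))
    (δ : ℝ) (hδ0 : 0 < δ) (hδ1 : δ < 1 / 2)
    (hpδ : ∀ᵐ ω ∂P, δ ≤ p (Z ω) ∧ p (Z ω) ≤ 1 - δ)
    (H : Ω → ℝ)
    (hH : H = fun ω => T ω / p (Z ω) - (1 - T ω) / (1 - p (Z ω)))
    (G : Set 𝓩) (hGm : MeasurableSet G) (hPG : 0 < P {ω | Z ω ∈ G})
    (hYint : Integrable Y P)
    (hg0int : Integrable (fun ω => g0 (Z ω)) P) (hg1int : Integrable (fun ω => g1 (Z ω)) P)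
    :
    ∫ ω, (Set.indicator G (fun _ => (1 : ℝ)) (Z ω) / (P {ω | Z ω ∈ G}).toReal) *
        (g1 (Z ω) - g0 (Z ω) +
          (Y ω - (if T ω = 1 then g1 (Z ω) else g0 (Z ω))) * H ω) ∂P =
      ∫ ω, θ ω ∂(ProbabilityTheory.cond P {ω | Z ω ∈ G}) :=
  gate_score_identification_general P Y T Z hTm hZm hTbin g0 g1 p hpm hU θ hθ δ hδ0 hpδ H hH G hGm
    hYint hg0int hg1int
end

section
/- (Product-form bound on the double-robustness bias, supporting the rate remark.) Under the IRM with ML proxies, the bias terms satisfy the Cauchy–Schwarz bounds |E[bias₁]| ≤ ε⁻¹ · ‖μ(Z) − μ̃(Z)‖_{L²(P)} · ‖g_1(Z) − g̃_1(Z)‖_{L²(P)} and |E[bias₂]| ≤ ε⁻¹ · ‖μ(Z) − μ̃(Z)‖_{L²(P)} · ‖g_0(Z) − g̃_0(Z)‖_{L²(P)}, provided μ(Z) − μ̃(Z), g_1(Z) − g̃_1(Z), and g_0(Z) − g̃_0(Z) are square-integrable. In particular, both bias expectations are bounded by a constant multiple of the product of the L² estimation errors of the propensity proxy and the outcome proxies.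 -/
open MeasureTheory ProbabilityTheory

/-!
Both biases factor as `(μ - μ̃) / d · (g - g̃)` with a denominator `d ∈ {μ̃, 1 - μ̃}` bounded below
by `ε`, so pointwise `|bias| ≤ ε⁻¹ |μ - μ̃| |g - g̃|`; integrating and applying Cauchy–Schwarz in
`L²(P)` gives the product bound.
-/

theorem integral_abs_mul_abs_le_sqrt_mul_sqrt {Ω : Type*} [MeasurableSpace Ω] {P : Measure Ω}
    {a b : Ω → ℝ} (ha : MemLp a 2 P) (hb : MemLp b 2 P) :
    ∫ ω, |a ω| * |b ω| ∂P ≤ √(∫ ω, a ω ^ 2 ∂P) * √(∫ ω, b ω ^ 2 ∂P) := by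
  have holder := integral_mul_norm_le_Lp_mul_Lq Real.HolderConjugate.two_two
    (by simpa using ha) (by simpa using hb)
  simpa only [Real.norm_eq_abs, Real.rpow_two, sq_abs, Real.sqrt_eq_rpow, one_div] using holder

theorem abs_integral_le_mul_sqrt_mul_sqrt {Ω : Type*} [MeasurableSpace Ω] {P : Measure Ω}
    {f a b : Ω → ℝ} {c : ℝ} (hc : 0 ≤ c) (ha : MemLp a 2 P) (hb : MemLp b 2 P)
    (hf : ∀ᵐ ω ∂P, |f ω| ≤ c * (|a ω| * |b ω|)) :
    |∫ ω, f ω ∂P| ≤ c * √(∫ ω, a ω ^ 2 ∂P) * √(∫ ω, b ω ^ 2 ∂P) := by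
  have hab : Integrable (fun ω => |a ω| * |b ω|) P := ha.abs.integrable_mul hb.abs
  calc |∫ ω, f ω ∂P| ≤ ∫ ω, |f ω| ∂P := abs_integral_le_integral_abs
    _ ≤ ∫ ω, c * (|a ω| * |b ω|) ∂P :=
        integral_mono_of_nonneg (.of_forall fun _ => abs_nonneg _) (hab.const_mul c) hf
    _ = c * ∫ ω, |a ω| * |b ω| ∂P := integral_const_mul c _
    _ ≤ c * √(∫ ω, a ω ^ 2 ∂P) * √(∫ ω, b ω ^ 2 ∂P) := by
        rw [mul_assoc]
        exact mul_le_mul_of_nonneg_left (integral_abs_mul_abs_le_sqrt_mul_sqrt ha hb) hc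

theorem abs_div_sub_one_le_inv_mul {ε q r : ℝ} (hε : 0 < ε) (hr : ε ≤ r) :
    |q / r - 1| ≤ ε⁻¹ * |q - r| := by
  have hr0 : 0 < r := hε.trans_le hr
  rw [div_sub_one hr0.ne', abs_div, abs_of_pos hr0, div_eq_inv_mul]
  exact mul_le_mul_of_nonneg_right (inv_anti₀ hε hr) (abs_nonneg _)

theorem bias_product_form_bound_general
    {Ω : Type*} [MeasurableSpace Ω] (P : Measure Ω)
    {𝓩 : Type*}
    (Z : Ω → 𝓩)
    (g0 g1 p : 𝓩 → ℝ)
    (gt0 gt1 pt : 𝓩 → ℝ)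
    (ε : ℝ) (hε0 : 0 < ε)
    (hptbd : ∀ᵐ ω ∂P, ε ≤ pt (Z ω) ∧ pt (Z ω) ≤ 1 - ε)
    (bias1 bias2 : Ω → ℝ)
    (hbias1 : bias1 = fun ω => (p (Z ω) / pt (Z ω) - 1) * (g1 (Z ω) - gt1 (Z ω)))
    (hbias2 : bias2 = fun ω =>
      (1 - (1 - p (Z ω)) / (1 - pt (Z ω))) * (g0 (Z ω) - gt0 (Z ω)))
    (hpdiff2 : MemLp (fun ω => p (Z ω) - pt (Z ω)) 2 P)
    (hg1diff2 : MemLp (fun ω => g1 (Z ω) - gt1 (Z ω)) 2 P)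
    (hg0diff2 : MemLp (fun ω => g0 (Z ω) - gt0 (Z ω)) 2 P)
    :
    |∫ ω, bias1 ω ∂P| ≤ ε⁻¹ *
        Real.sqrt (∫ ω, (p (Z ω) - pt (Z ω)) ^ 2 ∂P) *
        Real.sqrt (∫ ω, (g1 (Z ω) - gt1 (Z ω)) ^ 2 ∂P) ∧
    |∫ ω, bias2 ω ∂P| ≤ ε⁻¹ *
        Real.sqrt (∫ ω, (p (Z ω) - pt (Z ω)) ^ 2 ∂P) *
        Real.sqrt (∫ ω, (g0 (Z ω) - gt0 (Z ω)) ^ 2 ∂P) := by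
  subst hbias1 hbias2
  have hε : 0 ≤ ε⁻¹ := inv_nonneg.2 hε0.le
  constructor
  · refine abs_integral_le_mul_sqrt_mul_sqrt hε hpdiff2 hg1diff2 ?_
    filter_upwards [hptbd] with ω hω
    rw [abs_mul, ← mul_assoc]
    exact mul_le_mul_of_nonneg_right (abs_div_sub_one_le_inv_mul hε0 hω.1) (abs_nonneg _)
  · refine abs_integral_le_mul_sqrt_mul_sqrt hε hpdiff2 hg0diff2 ?_
    filter_upwards [hptbd] with ω hω
    have hfactor := abs_div_sub_one_le_inv_mul (q := 1 - p (Z ω)) hε0 (le_sub_comm.1 hω.2)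
    rw [abs_sub_comm, sub_sub_sub_cancel_left, abs_sub_comm (pt (Z ω))] at hfactor
    rw [abs_mul, ← mul_assoc]
    exact mul_le_mul_of_nonneg_right hfactor (abs_nonneg _)

theorem bias_product_form_bound
    {Ω : Type*} [MeasurableSpace Ω] (P : Measure Ω) [IsProbabilityMeasure P]
    {𝓩 : Type*} [MeasurableSpace 𝓩]
    (Y T : Ω → ℝ) (Z : Ω → 𝓩)
    (hYm : Measurable Y) (hTm : Measurable T) (hZm : Measurable Z)
    (hTbin : ∀ ω, T ω = 0 ∨ T ω = 1)
    (g0 g1 p : 𝓩 → ℝ) (hg0m : Measurable g0) (hg1m : Measurable g1) (hpm : Measurable p)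
    (hU : MeasureTheory.condExp
        (MeasurableSpace.comap (fun ω => (T ω, Z ω)) inferInstance) P
        (fun ω => Y ω - (if T ω = 1 then g1 (Z ω) else g0 (Z ω))) =ᵐ[P] 0)
    (hprop : (fun ω => p (Z ω)) =ᵐ[P]
        MeasureTheory.condExp (MeasurableSpace.comap Z inferInstance) P T)
    (hpbd : ∀ᵐ ω ∂P, 0 < p (Z ω) ∧ p (Z ω) < 1)
    (gt0 gt1 pt : 𝓩 → ℝ)
    (hgt0m : Measurable gt0) (hgt1m : Measurable gt1) (hptm : Measurable pt)
    (ε : ℝ) (hε0 : 0 < ε) (hε1 : ε < 1 / 2)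
    (hptbd : ∀ᵐ ω ∂P, ε ≤ pt (Z ω) ∧ pt (Z ω) ≤ 1 - ε)
    (bias1 bias2 : Ω → ℝ)
    (hbias1 : bias1 = fun ω => (p (Z ω) / pt (Z ω) - 1) * (g1 (Z ω) - gt1 (Z ω)))
    (hbias2 : bias2 = fun ω =>
      (1 - (1 - p (Z ω)) / (1 - pt (Z ω))) * (g0 (Z ω) - gt0 (Z ω)))
    (hpdiff2 : MemLp (fun ω => p (Z ω) - pt (Z ω)) 2 P)
    (hg1diff2 : MemLp (fun ω => g1 (Z ω) - gt1 (Z ω)) 2 P)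
    (hg0diff2 : MemLp (fun ω => g0 (Z ω) - gt0 (Z ω)) 2 P)
    :
    |∫ ω, bias1 ω ∂P| ≤ ε⁻¹ *
        Real.sqrt (∫ ω, (p (Z ω) - pt (Z ω)) ^ 2 ∂P) *
        Real.sqrt (∫ ω, (g1 (Z ω) - gt1 (Z ω)) ^ 2 ∂P) ∧
    |∫ ω, bias2 ω ∂P| ≤ ε⁻¹ *
        Real.sqrt (∫ ω, (p (Z ω) - pt (Z ω)) ^ 2 ∂P) *
        Real.sqrt (∫ ω, (g0 (Z ω) - gt0 (Z ω)) ^ 2 ∂P) :=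
  bias_product_form_bound_general P Z g0 g1 p gt0 gt1 pt ε hε0 hptbd bias1 bias2 hbias1 hbias2
    hpdiff2 hg1diff2 hg0diff2
end

section
/- (Conditional expectation of the plug-in correction term.) Under the IRM with ML proxies, the correction term of the doubly robust label satisfies E[H̃·(Y − g̃_T(Z)) | σ(Z)] = (μ(Z)/μ̃(Z))·(g_1(Z) − g̃_1(Z)) − ((1 − μ(Z))/(1 − μ̃(Z)))·(g_0(Z) − g̃_0(Z)) almost surely. -/
/-!
Split the residual as `Y - g̃_T(Z) = (Y - g_T(Z)) + (g_T(Z) - g̃_T(Z))`. The first part has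
conditional mean zero given `(T, Z)`, and `H̃` is a bounded function of `(T, Z)`, so by the tower
property it contributes nothing given `Z`. Since `T ∈ {0, 1}`, the second part times `H̃` equals
`T · (a(Z) + b(Z)) - b(Z)` with `a = (g₁ - g̃₁)/μ̃` and `b = (g₀ - g̃₀)/(1 - μ̃)`, whose conditional
expectation given `Z` is `μ(Z) · (a(Z) + b(Z)) - b(Z) = μ(Z) a(Z) - (1 - μ(Z)) b(Z)`.
-/

open MeasureTheory ProbabilityTheory

noncomputable def ipwWeight (t q : ℝ) : ℝ := t / q - (1 - t) / (1 - q)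

lemma ipwWeight_mul_sub_ite {t : ℝ} (ht : t = 0 ∨ t = 1) (q y u₀ u₁ v₀ v₁ : ℝ) :
    ipwWeight t q * (y - if t = 1 then v₁ else v₀) =
      ipwWeight t q * (y - if t = 1 then u₁ else u₀) +
        (t * ((u₁ - v₁) / q + (u₀ - v₀) / (1 - q)) - (u₀ - v₀) / (1 - q)) := by
  rcases ht with rfl | rfl <;> simp [ipwWeight] <;> ring

lemma abs_ipwWeight_le {t q ε : ℝ} (ht : t = 0 ∨ t = 1) (hε : 0 < ε) (hq₀ : ε ≤ q)
    (hq₁ : q ≤ 1 - ε) : |ipwWeight t q| ≤ ε⁻¹ := by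
  rcases ht with rfl | rfl
  · have : 0 < 1 - q := by linarith
    simpa [ipwWeight, abs_of_pos this] using inv_anti₀ hε (by linarith)
  · have : 0 < q := by linarith
    simpa [ipwWeight, abs_of_pos this] using inv_anti₀ hε hq₀

namespace MeasureTheory

section

variable {α : Type*} [MeasurableSpace α] {μ : Measure α}

lemma Integrable.ite {p : α → Prop} [DecidablePred p] {f g : α → ℝ}
    (hp : MeasurableSet {x | p x}) (hf : Integrable f μ) (hg : Integrable g μ) :
    Integrable (fun x => if p x then f x else g x) μ :=
  Integrable.piecewise (s := {x | p x}) hp hf.integrableOn hg.integrableOn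

lemma Integrable.div_of_ae_le {f q : α → ℝ} {ε : ℝ} (hf : Integrable f μ)
    (hq : AEMeasurable q μ) (hε : 0 < ε) (hqε : ∀ᵐ x ∂μ, ε ≤ q x) :
    Integrable (fun x => f x / q x) μ := by
  simp only [div_eq_mul_inv]
  refine hf.mul_bdd (c := ε⁻¹) hq.inv.aestronglyMeasurable ?_
  filter_upwards [hqε] with x hx
  rw [norm_inv, Real.norm_of_nonneg (hε.le.trans hx)]
  exact inv_anti₀ hε hx

end

section

variable {Ω : Type*} {m₁ m₂ mΩ : MeasurableSpace Ω} {μ : Measure Ω} [IsFiniteMeasure μ]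

lemma condExp_mul_eq_zero_of_condExp_eq_zero (h₁₂ : m₁ ≤ m₂) (h₂ : m₂ ≤ mΩ)
    {h g : Ω → ℝ} {C : ℝ} (hh : StronglyMeasurable[m₂] h) (hC : ∀ᵐ ω ∂μ, ‖h ω‖ ≤ C)
    (hg : Integrable g μ) (hg₀ : μ[g | m₂] =ᵐ[μ] 0) : μ[h * g | m₁] =ᵐ[μ] 0 := by
  have hpull : μ[h * g | m₂] =ᵐ[μ] 0 := by
    filter_upwards [condExp_stronglyMeasurable_mul_of_bound h₂ hh hg C hC, hg₀] with ω h₁ h₂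
    simp [h₁, h₂]
  calc μ[h * g | m₁] =ᵐ[μ] μ[μ[h * g | m₂] | m₁] := (condExp_condExp_of_le h₁₂ h₂).symm
    _ =ᵐ[μ] μ[(0 : Ω → ℝ) | m₁] := condExp_congr_ae hpull
    _ = 0 := condExp_zero

lemma condExp_mul_add_mul_sub_of_condExp_eq_zero (h₁₂ : m₁ ≤ m₂) (h₂ : m₂ ≤ mΩ)
    {h g t c b : Ω → ℝ} {C : ℝ} (hh : StronglyMeasurable[m₂] h) (hC : ∀ᵐ ω ∂μ, ‖h ω‖ ≤ C)
    (hg : Integrable g μ) (hg₀ : μ[g | m₂] =ᵐ[μ] 0)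
    (hc : StronglyMeasurable[m₁] c) (hb : StronglyMeasurable[m₁] b) (ht : Integrable t μ)
    (htc : Integrable (t * c) μ) (hb_int : Integrable b μ) :
    μ[h * g + (t * c - b) | m₁] =ᵐ[μ] μ[t | m₁] * c - b := by
  have hhg : Integrable (h * g) μ := hg.bdd_mul (hh.mono h₂).aestronglyMeasurable hC
  filter_upwards [condExp_add hhg (htc.sub hb_int) m₁, condExp_sub htc hb_int m₁,
    condExp_mul_eq_zero_of_condExp_eq_zero h₁₂ h₂ hh hC hg hg₀,
    condExp_mul_of_stronglyMeasurable_right hc htc ht] with ω h_add h_sub h_noise h_pull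
  simp only [Pi.add_apply, Pi.sub_apply, Pi.mul_apply, Pi.zero_apply]
    at h_add h_sub h_noise h_pull ⊢
  rw [h_add, h_sub, h_noise, h_pull, condExp_of_stronglyMeasurable (h₁₂.trans h₂) hb hb_int,
    zero_add]

end

end MeasureTheory

theorem condexp_plugin_correction_general
    {Ω : Type*} [MeasurableSpace Ω] (P : Measure Ω) [IsProbabilityMeasure P]
    {𝓩 : Type*} [MeasurableSpace 𝓩]
    (Y T : Ω → ℝ) (Z : Ω → 𝓩)
    (hTm : Measurable T) (hZm : Measurable Z)
    (hTbin : ∀ ω, T ω = 0 ∨ T ω = 1)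
    (g0 g1 p : 𝓩 → ℝ) (hg0m : Measurable g0) (hg1m : Measurable g1)
    (hU : MeasureTheory.condExp
        (MeasurableSpace.comap (fun ω => (T ω, Z ω)) inferInstance) P
        (fun ω => Y ω - (if T ω = 1 then g1 (Z ω) else g0 (Z ω))) =ᵐ[P] 0)
    (hprop : (fun ω => p (Z ω)) =ᵐ[P]
        MeasureTheory.condExp (MeasurableSpace.comap Z inferInstance) P T)
    (gt0 gt1 pt : 𝓩 → ℝ)
    (hgt0m : Measurable gt0) (hgt1m : Measurable gt1) (hptm : Measurable pt)
    (ε : ℝ) (hε0 : 0 < ε)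
    (hptbd : ∀ᵐ ω ∂P, ε ≤ pt (Z ω) ∧ pt (Z ω) ≤ 1 - ε)
    (Ht : Ω → ℝ) (hHt : Ht = fun ω => T ω / pt (Z ω) - (1 - T ω) / (1 - pt (Z ω)))
    (hYint : Integrable Y P)
    (hg0int : Integrable (fun ω => g0 (Z ω)) P) (hg1int : Integrable (fun ω => g1 (Z ω)) P)
    (hgt0int : Integrable (fun ω => gt0 (Z ω)) P)
    (hgt1int : Integrable (fun ω => gt1 (Z ω)) P)
    :
    MeasureTheory.condExp (MeasurableSpace.comap Z inferInstance) P
      (fun ω => Ht ω * (Y ω - (if T ω = 1 then gt1 (Z ω) else gt0 (Z ω)))) =ᵐ[P]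
    (fun ω => (p (Z ω) / pt (Z ω)) * (g1 (Z ω) - gt1 (Z ω)) -
      ((1 - p (Z ω)) / (1 - pt (Z ω))) * (g0 (Z ω) - gt0 (Z ω))) := by
  set a : 𝓩 → ℝ := fun z => (g1 z - gt1 z) / pt z
  set b : 𝓩 → ℝ := fun z => (g0 z - gt0 z) / (1 - pt z)
  set R : Ω → ℝ := fun ω => Y ω - (if T ω = 1 then g1 (Z ω) else g0 (Z ω))
  have hZ_le : MeasurableSpace.comap Z inferInstance ≤
      MeasurableSpace.comap (fun ω => (T ω, Z ω)) inferInstance :=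
    MeasurableSpace.comap_le_comap_of_eq_comp Prod.snd measurable_snd rfl
  have hTZ_le := (hTm.prodMk hZm).comap_le
  have hHt_bd : ∀ᵐ ω ∂P, ‖Ht ω‖ ≤ ε⁻¹ := by
    filter_upwards [hptbd] with ω hω using hHt ▸ abs_ipwWeight_le (hTbin ω) hε0 hω.1 hω.2
  have ha : Integrable (a ∘ Z) P := (hg1int.sub hgt1int).div_of_ae_le
    (hptm.comp hZm).aemeasurable hε0 (hptbd.mono fun _ h => h.1)
  have hb : Integrable (b ∘ Z) P := (hg0int.sub hgt0int).div_of_ae_le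
    (measurable_const.sub (hptm.comp hZm)).aemeasurable hε0
    (hptbd.mono fun _ h => by linarith [h.2])
  have hT_bd : ∀ ω, ‖T ω‖ ≤ 1 := fun ω => by rcases hTbin ω with h | h <;> simp [h]
  have hT : Integrable T P := .of_bound hTm.aestronglyMeasurable 1 (.of_forall hT_bd)
  have hR : Integrable R P := hYint.sub (.ite (hTm (measurableSet_singleton 1)) hg1int hg0int)
  have hHt_meas : Measurable[MeasurableSpace.comap (fun ω => (T ω, Z ω)) inferInstance] Ht :=
    hHt ▸ (show Measurable fun q : ℝ × 𝓩 => ipwWeight q.1 (pt q.2) by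
      unfold ipwWeight; fun_prop).comp (comap_measurable _)
  have hTab : Integrable (T * (a + b) ∘ Z) P :=
    (ha.add hb).bdd_mul hTm.aestronglyMeasurable (.of_forall hT_bd)
  have ha_meas : Measurable a := (hg1m.sub hgt1m).div hptm
  have hb_meas : Measurable b := (hg0m.sub hgt0m).div (measurable_const.sub hptm)
  have hdecomp : (fun ω => Ht ω * (Y ω - (if T ω = 1 then gt1 (Z ω) else gt0 (Z ω)))) =
      Ht * R + (T * (a + b) ∘ Z - b ∘ Z) := by
    funext ω
    rw [hHt]
    exact ipwWeight_mul_sub_ite (hTbin ω) _ _ _ _ _ _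
  rw [hdecomp]
  filter_upwards [condExp_mul_add_mul_sub_of_condExp_eq_zero hZ_le hTZ_le
    hHt_meas.stronglyMeasurable hHt_bd hR hU
    ((ha_meas.add hb_meas).comp (comap_measurable Z)).stronglyMeasurable
    (hb_meas.comp (comap_measurable Z)).stronglyMeasurable hT hTab hb, hprop] with ω h h_prop
  rw [h, Pi.sub_apply, Pi.mul_apply, ← h_prop]
  simp only [a, b, Function.comp_apply, Pi.add_apply]
  ring

theorem condexp_plugin_correction
    {Ω : Type*} [MeasurableSpace Ω] (P : Measure Ω) [IsProbabilityMeasure P]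
    {𝓩 : Type*} [MeasurableSpace 𝓩]
    (Y T : Ω → ℝ) (Z : Ω → 𝓩)
    (hYm : Measurable Y) (hTm : Measurable T) (hZm : Measurable Z)
    (hTbin : ∀ ω, T ω = 0 ∨ T ω = 1)
    (g0 g1 p : 𝓩 → ℝ) (hg0m : Measurable g0) (hg1m : Measurable g1) (hpm : Measurable p)
    (hU : MeasureTheory.condExp
        (MeasurableSpace.comap (fun ω => (T ω, Z ω)) inferInstance) P
        (fun ω => Y ω - (if T ω = 1 then g1 (Z ω) else g0 (Z ω))) =ᵐ[P] 0)
    (hprop : (fun ω => p (Z ω)) =ᵐ[P]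
        MeasureTheory.condExp (MeasurableSpace.comap Z inferInstance) P T)
    (hpbd : ∀ᵐ ω ∂P, 0 < p (Z ω) ∧ p (Z ω) < 1)
    (gt0 gt1 pt : 𝓩 → ℝ)
    (hgt0m : Measurable gt0) (hgt1m : Measurable gt1) (hptm : Measurable pt)
    (ε : ℝ) (hε0 : 0 < ε) (hε1 : ε < 1 / 2)
    (hptbd : ∀ᵐ ω ∂P, ε ≤ pt (Z ω) ∧ pt (Z ω) ≤ 1 - ε)
    (Ht : Ω → ℝ) (hHt : Ht = fun ω => T ω / pt (Z ω) - (1 - T ω) / (1 - pt (Z ω)))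
    (hYint : Integrable Y P)
    (hg0int : Integrable (fun ω => g0 (Z ω)) P) (hg1int : Integrable (fun ω => g1 (Z ω)) P)
    (hgt0int : Integrable (fun ω => gt0 (Z ω)) P)
    (hgt1int : Integrable (fun ω => gt1 (Z ω)) P)
    :
    MeasureTheory.condExp (MeasurableSpace.comap Z inferInstance) P
      (fun ω => Ht ω * (Y ω - (if T ω = 1 then gt1 (Z ω) else gt0 (Z ω)))) =ᵐ[P]
    (fun ω => (p (Z ω) / pt (Z ω)) * (g1 (Z ω) - gt1 (Z ω)) -
      ((1 - p (Z ω)) / (1 - pt (Z ω))) * (g0 (Z ω) - gt0 (Z ω))) :=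
  condexp_plugin_correction_general P Y T Z hTm hZm hTbin g0 g1 p hg0m hg1m hU hprop gt0 gt1 pt
    hgt0m hgt1m hptm ε hε0 hptbd Ht hHt hYint hg0int hg1int hgt0int hgt1int
end
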